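/- arXiv:1703.05861 — 9 statements merged into one kernel-verified Lean document; each statement's English description precedes it below -/
import Mathlib

section
/- For all m, n ≥ 2, the upper domination number of the Cartesian product K_m □ K_n equals max{m, n}. -/
open SimpleGraph

variable {V : Type*} {W : Type*}

/-- `D` is a dominating set of `G`: every vertex outside `D` has a neighbor in `D`. -/
def IsDomSet (G : SimpleGraph V) (D : Set V) : Prop :=
  ∀ v ∉ D, ∃ u ∈ D, G.Adj u v

/-- `D` is a minimal dominating set: dominating, and no proper subset is dominating. -/
def IsMinDomSet (G : SimpleGraph V) (D : Set V) : Prop :=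
  IsDomSet G D ∧ ∀ D' ⊂ D, ¬ IsDomSet G D'

/-- The upper domination number `Γ(G)`: maximum size of a minimal dominating set. -/
noncomputable def upperDom (G : SimpleGraph V) : ℕ :=
  sSup {n | ∃ D : Set V, IsMinDomSet G D ∧ D.ncard = n}

namespace RookAux

/-- The rook's graph `K_m □ K_n`. -/
abbrev GG (m n : ℕ) : SimpleGraph (Fin m × Fin n) :=
  (⊤ : SimpleGraph (Fin m)).boxProd (⊤ : SimpleGraph (Fin n))

lemma adj_iff {m n : ℕ} (x y : Fin m × Fin n) :
    (GG m n).Adj x y ↔ (x.1 ≠ y.1 ∧ x.2 = y.2) ∨ (x.2 ≠ y.2 ∧ x.1 = y.1) := by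
  rw [boxProd_adj]; simp

/-- A full row is a minimal dominating set. -/
lemma row_minDom {m n : ℕ} (hm : 2 ≤ m) (i0 : Fin m) :
    IsMinDomSet (GG m n) {p : Fin m × Fin n | p.1 = i0} := by
  constructor
  · intro v hv
    refine ⟨(i0, v.2), rfl, ?_⟩
    rw [adj_iff]
    exact Or.inl ⟨fun h => hv h.symm, rfl⟩
  · rintro D' ⟨hsub, hne⟩ hdom
    obtain ⟨p, hp, hp'⟩ : ∃ p, p ∈ {p : Fin m × Fin n | p.1 = i0} ∧ p ∉ D' := by
      by_contra h
      push_neg at h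
      exact hne h
    haveI : Nontrivial (Fin m) := Fin.nontrivial_iff_two_le.mpr hm
    obtain ⟨i1, hi1⟩ : ∃ i1 : Fin m, i1 ≠ i0 := exists_ne i0
    have hv : (i1, p.2) ∉ D' := by
      intro h
      exact hi1 (hsub h)
    obtain ⟨u, huD, hadj⟩ := hdom _ hv
    have hu1 : u.1 = i0 := hsub huD
    rw [adj_iff] at hadj
    rcases hadj with ⟨_, h2⟩ | ⟨_, h1⟩
    · apply hp'
      have : u = p := Prod.ext (hu1.trans hp.symm) h2
      rwa [this] at huD
    · exact hi1 (h1.symm.trans hu1)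

/-- A full column is a minimal dominating set. -/
lemma col_minDom {m n : ℕ} (hn : 2 ≤ n) (j0 : Fin n) :
    IsMinDomSet (GG m n) {p : Fin m × Fin n | p.2 = j0} := by
  constructor
  · intro v hv
    refine ⟨(v.1, j0), rfl, ?_⟩
    rw [adj_iff]
    exact Or.inr ⟨fun h => hv h.symm, rfl⟩
  · rintro D' ⟨hsub, hne⟩ hdom
    obtain ⟨p, hp, hp'⟩ : ∃ p, p ∈ {p : Fin m × Fin n | p.2 = j0} ∧ p ∉ D' := by
      by_contra h
      push_neg at h
      exact hne h
    haveI : Nontrivial (Fin n) := Fin.nontrivial_iff_two_le.mpr hn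
    obtain ⟨j1, hj1⟩ : ∃ j1 : Fin n, j1 ≠ j0 := exists_ne j0
    have hv : (p.1, j1) ∉ D' := by
      intro h
      exact hj1 (hsub h)
    obtain ⟨u, huD, hadj⟩ := hdom _ hv
    have hu2 : u.2 = j0 := hsub huD
    rw [adj_iff] at hadj
    rcases hadj with ⟨_, h2⟩ | ⟨_, h1⟩
    · exact hj1 (h2.symm.trans hu2)
    · apply hp'
      have : u = p := Prod.ext h1 (hu2.trans hp.symm)
      rwa [this] at huD

lemma ncard_row {m n : ℕ} (i0 : Fin m) :
    ({p : Fin m × Fin n | p.1 = i0} : Set (Fin m × Fin n)).ncard = n := by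
  have : {p : Fin m × Fin n | p.1 = i0} = (fun j : Fin n => (i0, j)) '' Set.univ := by
    ext ⟨a, b⟩
    simp [eq_comm]
  rw [this, Set.ncard_image_of_injective _ (fun a b h => by simpa using h),
    Set.ncard_univ, Nat.card_eq_fintype_card, Fintype.card_fin]

lemma ncard_col {m n : ℕ} (j0 : Fin n) :
    ({p : Fin m × Fin n | p.2 = j0} : Set (Fin m × Fin n)).ncard = m := by
  have : {p : Fin m × Fin n | p.2 = j0} = (fun i : Fin m => (i, j0)) '' Set.univ := by
    ext ⟨a, b⟩
    simp [eq_comm]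
  rw [this, Set.ncard_image_of_injective _ (fun a b h => by simpa using h),
    Set.ncard_univ, Nat.card_eq_fintype_card, Fintype.card_fin]

lemma ncard_le_of_injOn_fst {m n : ℕ} (D : Set (Fin m × Fin n)) (h : Set.InjOn Prod.fst D) :
    D.ncard ≤ m := by
  calc D.ncard = (Prod.fst '' D).ncard := (Set.ncard_image_of_injOn h).symm
    _ ≤ (Set.univ : Set (Fin m)).ncard :=
        Set.ncard_le_ncard (Set.subset_univ _) Set.finite_univ
    _ = m := by rw [Set.ncard_univ, Nat.card_eq_fintype_card, Fintype.card_fin]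

lemma ncard_le_of_injOn_snd {m n : ℕ} (D : Set (Fin m × Fin n)) (h : Set.InjOn Prod.snd D) :
    D.ncard ≤ n := by
  calc D.ncard = (Prod.snd '' D).ncard := (Set.ncard_image_of_injOn h).symm
    _ ≤ (Set.univ : Set (Fin n)).ncard :=
        Set.ncard_le_ncard (Set.subset_univ _) Set.finite_univ
    _ = n := by rw [Set.ncard_univ, Nat.card_eq_fintype_card, Fintype.card_fin]

/-- For each `d ∈ D` of a minimal dominating set, there is a "private" witness. -/
lemma private_witness {m n : ℕ} {D : Set (Fin m × Fin n)} (hD : IsMinDomSet (GG m n) D)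
    {d : Fin m × Fin n} (hd : d ∈ D) :
    ∃ v, v ∉ D \ {d} ∧ ∀ u ∈ D \ {d}, ¬ (GG m n).Adj u v := by
  have hsub : D \ {d} ⊂ D := by
    refine ⟨Set.diff_subset, fun hle => ?_⟩
    have := hle hd
    simp at this
  have := hD.2 _ hsub
  unfold IsDomSet at this
  push_neg at this
  obtain ⟨v, hv1, hv2⟩ := this
  exact ⟨v, hv1, fun u hu => hv2 u hu⟩

lemma upper_bound {m n : ℕ} {D : Set (Fin m × Fin n)} (hD : IsMinDomSet (GG m n) D) :
    D.ncard ≤ max m n := by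
  by_cases hrow : ∃ i0 : Fin m, ∀ p ∈ D, p.1 ≠ i0
  · -- some row empty: every column hit; snd injective on D
    obtain ⟨i0, hi0⟩ := hrow
    have hcol : ∀ j : Fin n, ∃ u ∈ D, u.2 = j := by
      intro j
      have hnot : (i0, j) ∉ D := fun h => hi0 _ h rfl
      obtain ⟨u, hu, hadj⟩ := hD.1 _ hnot
      rw [adj_iff] at hadj
      rcases hadj with ⟨_, h2⟩ | ⟨_, h1⟩
      · exact ⟨u, hu, h2⟩
      · exact absurd h1 (hi0 _ hu)
    refine le_trans (ncard_le_of_injOn_snd D ?_) (le_max_right m n)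
    intro d1 hd1 d2 hd2 heq
    by_contra hne
    obtain ⟨v, hv1, hv2⟩ := private_witness hD hd1
    have hd2' : d2 ∈ D \ {d1} := ⟨hd2, fun h => hne (Set.mem_singleton_iff.mp h).symm⟩
    by_cases hvd : v = d1
    · apply hv2 d2 hd2'
      rw [adj_iff, hvd]
      exact Or.inl ⟨fun h => hne (Prod.ext h heq.symm).symm, heq.symm⟩
    · have hvD : v ∉ D := fun h => hv1 ⟨h, hvd⟩
      obtain ⟨u, hu, hu2⟩ := hcol v.2
      have huv : u ≠ v := fun h => hvD (h ▸ hu)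
      have hadj : (GG m n).Adj u v := by
        rw [adj_iff]
        exact Or.inl ⟨fun h => huv (Prod.ext h hu2), hu2⟩
      have hud1 : u = d1 := by
        by_contra h
        exact hv2 u ⟨hu, h⟩ hadj
      apply hv2 d2 hd2'
      rw [adj_iff]
      have hd2v : d2.2 = v.2 := heq.symm.trans (hud1 ▸ hu2)
      exact Or.inl ⟨fun h => hvD ((Prod.ext h hd2v : d2 = v) ▸ hd2), hd2v⟩
  · by_cases hcol : ∃ j0 : Fin n, ∀ p ∈ D, p.2 ≠ j0
    · -- some column empty: fst injective on D
      obtain ⟨j0, hj0⟩ := hcol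
      have hrow' : ∀ i : Fin m, ∃ u ∈ D, u.1 = i := by
        intro i
        have hnot : (i, j0) ∉ D := fun h => hj0 _ h rfl
        obtain ⟨u, hu, hadj⟩ := hD.1 _ hnot
        rw [adj_iff] at hadj
        rcases hadj with ⟨_, h2⟩ | ⟨_, h1⟩
        · exact absurd h2 (hj0 _ hu)
        · exact ⟨u, hu, h1⟩
      refine le_trans (ncard_le_of_injOn_fst D ?_) (le_max_left m n)
      intro d1 hd1 d2 hd2 heq
      by_contra hne
      obtain ⟨v, hv1, hv2⟩ := private_witness hD hd1
      have hd2' : d2 ∈ D \ {d1} := ⟨hd2, fun h => hne (Set.mem_singleton_iff.mp h).symm⟩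
      by_cases hvd : v = d1
      · apply hv2 d2 hd2'
        rw [adj_iff, hvd]
        exact Or.inr ⟨fun h => hne (Prod.ext heq.symm h).symm, heq.symm⟩
      · have hvD : v ∉ D := fun h => hv1 ⟨h, hvd⟩
        obtain ⟨u, hu, hu1⟩ := hrow' v.1
        have huv : u ≠ v := fun h => hvD (h ▸ hu)
        have hadj : (GG m n).Adj u v := by
          rw [adj_iff]
          exact Or.inr ⟨fun h => huv (Prod.ext hu1 h), hu1⟩
        have hud1 : u = d1 := by
          by_contra h
          exact hv2 u ⟨hu, h⟩ hadj
        apply hv2 d2 hd2'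
        rw [adj_iff]
        have hd2v : d2.1 = v.1 := heq.symm.trans (hud1 ▸ hu1)
        exact Or.inr ⟨fun h => hvD ((Prod.ext hd2v h : d2 = v) ▸ hd2), hd2v⟩
    · -- all rows and columns hit: fst injective on D
      push_neg at hrow hcol
      refine le_trans (ncard_le_of_injOn_fst D ?_) (le_max_left m n)
      intro d1 hd1 d2 hd2 heq
      by_contra hne
      obtain ⟨v, hv1, hv2⟩ := private_witness hD hd1
      have hd2' : d2 ∈ D \ {d1} := ⟨hd2, fun h => hne (Set.mem_singleton_iff.mp h).symm⟩
      by_cases hvd : v = d1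
      · apply hv2 d2 hd2'
        rw [adj_iff, hvd]
        exact Or.inr ⟨fun h => hne (Prod.ext heq.symm h).symm, heq.symm⟩
      · have hvD : v ∉ D := fun h => hv1 ⟨h, hvd⟩
        obtain ⟨u1, hu1D, hu1⟩ := hrow v.1
        obtain ⟨u2, hu2D, hu2⟩ := hcol v.2
        have h1v : u1 ≠ v := fun h => hvD (h ▸ hu1D)
        have h2v : u2 ≠ v := fun h => hvD (h ▸ hu2D)
        have h12 : u1 ≠ u2 := fun h => h1v (Prod.ext hu1 (h ▸ hu2))
        have ha1 : (GG m n).Adj u1 v := by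
          rw [adj_iff]
          exact Or.inr ⟨fun h => h1v (Prod.ext hu1 h), hu1⟩
        have ha2 : (GG m n).Adj u2 v := by
          rw [adj_iff]
          exact Or.inl ⟨fun h => h2v (Prod.ext h hu2), hu2⟩
        rcases eq_or_ne u1 d1 with h | h
        · refine hv2 u2 ⟨hu2D, fun h' => h12 ?_⟩ ha2
          have : u2 = d1 := h'
          rw [h, this]
        · exact hv2 u1 ⟨hu1D, h⟩ ha1

end RookAux

theorem stmt_2 (m n : ℕ) (hm : 2 ≤ m) (hn : 2 ≤ n) :
    upperDom ((⊤ : SimpleGraph (Fin m)).boxProd (⊤ : SimpleGraph (Fin n))) = max m n := by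
  haveI : NeZero m := ⟨by omega⟩
  haveI : NeZero n := ⟨by omega⟩
  have hmem : max m n ∈ {k | ∃ D : Set (Fin m × Fin n),
      IsMinDomSet (RookAux.GG m n) D ∧ D.ncard = k} := by
    rcases le_or_gt m n with h | h
    · refine ⟨{p | p.1 = 0}, RookAux.row_minDom hm 0, ?_⟩
      rw [RookAux.ncard_row, max_eq_right h]
    · refine ⟨{p | p.2 = 0}, RookAux.col_minDom hn 0, ?_⟩
      rw [RookAux.ncard_col, max_eq_left h.le]
  have hub : ∀ k ∈ {k | ∃ D : Set (Fin m × Fin n),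
      IsMinDomSet (RookAux.GG m n) D ∧ D.ncard = k}, k ≤ max m n := by
    rintro k ⟨D, hD, rfl⟩
    exact RookAux.upper_bound hD
  unfold upperDom
  exact le_antisymm (csSup_le ⟨_, hmem⟩ hub) (le_csSup ⟨max m n, hub⟩ hmem)
end

section
/- For any finite graph G, the upper domination number of K_2 □ G equals |V(G)|. -/
open SimpleGraph

variable {V : Type*} {W : Type*}

lemma fin2_cases (i : Fin 2) : i = 0 ∨ i = 1 := by omega

/-- The bottom copy `{0} × W` is a minimal dominating set of `K₂ □ H`. -/
lemma bottom_minDom (H : SimpleGraph W) :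
    IsMinDomSet ((⊤ : SimpleGraph (Fin 2)).boxProd H) {p : Fin 2 × W | p.1 = 0} := by
  constructor
  · intro v hv
    refine ⟨(0, v.2), rfl, ?_⟩
    rw [SimpleGraph.boxProd_adj]
    exact Or.inl ⟨by simp only [top_adj]; exact fun h => hv h.symm, rfl⟩
  · intro D' hD' hdom
    obtain ⟨d, hdD, hdD'⟩ := Set.exists_of_ssubset hD'
    have hsub := hD'.subset
    have hd0 : d.1 = 0 := hdD
    -- the vertex (1, d.2) is not dominated by D'
    have h1 : ((1 : Fin 2), d.2) ∉ D' := by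
      intro h
      have := hsub h
      simp only [Set.mem_setOf_eq] at this
      exact absurd this (by decide)
    obtain ⟨u, huD', hadj⟩ := hdom (1, d.2) h1
    have hu0 : u.1 = 0 := hsub huD'
    rw [SimpleGraph.boxProd_adj] at hadj
    rcases hadj with ⟨_, h2⟩ | ⟨_, h2⟩
    · -- u = (0, d.2) = d, but d ∉ D'
      have : u = d := Prod.ext (hu0.trans hd0.symm) h2
      exact hdD' (this ▸ huD')
    · simp only at h2; rw [hu0] at h2; exact absurd h2 (by decide)

/-- Private neighbour extraction for a vertex of a full column. -/
lemma private_neighbor (H : SimpleGraph W) {D : Set (Fin 2 × W)}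
    (hmin : IsMinDomSet ((⊤ : SimpleGraph (Fin 2)).boxProd H) D)
    {d : Fin 2 × W} (hd : d ∈ D) (hd1 : d.1 = 1) (hfull : (0, d.2) ∈ D) :
    ∃ v : Fin 2 × W, v ∉ D ∧ v.1 = 1 ∧ ((0 : Fin 2), v.2) ∉ D ∧
      ((⊤ : SimpleGraph (Fin 2)).boxProd H).Adj d v ∧
      ∀ u ∈ D, u ≠ d → ¬ ((⊤ : SimpleGraph (Fin 2)).boxProd H).Adj u v := by
  set G := (⊤ : SimpleGraph (Fin 2)).boxProd H with hG
  have hnot := hmin.2 (D \ {d}) (Set.sdiff_singleton_ssubset.mpr hd)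
  unfold IsDomSet at hnot
  push_neg at hnot
  obtain ⟨v, hvmem, hv⟩ := hnot
  have hv' : ∀ u ∈ D, u ≠ d → ¬ G.Adj u v := fun u hu hne =>
    hv u ⟨hu, hne⟩
  have hvne : v ≠ d := by
    intro h
    subst h
    have h0d : ((0 : Fin 2), v.2) ≠ v := by
      intro h; rw [← h] at hd1; simp at hd1
    refine hv' (0, v.2) hfull h0d ?_
    rw [hG, SimpleGraph.boxProd_adj]
    exact Or.inl ⟨by simp only [top_adj]; rw [hd1]; decide, rfl⟩
  have hvD : v ∉ D := fun h => hvmem ⟨h, hvne⟩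
  obtain ⟨u, huD, huadj⟩ := hmin.1 v hvD
  have hud : u = d := by
    by_contra hne
    exact hv' u huD hne huadj
  subst hud
  have hadj := huadj
  rw [hG, SimpleGraph.boxProd_adj] at hadj
  rcases hadj with ⟨h1, h2⟩ | ⟨h1, h2⟩
  · -- v is the rung partner (0, d.2) ∈ D : contradiction
    exfalso
    have hv1 : v.1 = 0 := by
      simp only [top_adj] at h1
      rcases fin2_cases v.1 with h | h
      · exact h
      · rw [hd1, h] at h1; exact absurd rfl h1
    have : v = ((0 : Fin 2), u.2) := Prod.ext hv1 h2.symm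
    rw [this] at hvD
    exact hvD hfull
  · refine ⟨v, hvD, by rw [← h2, hd1], ?_, huadj, hv'⟩
    intro h0
    have h0ne : ((0 : Fin 2), v.2) ≠ u := by
      intro h; rw [← h] at hd1; simp at hd1
    refine hv' (0, v.2) h0 h0ne ?_
    rw [hG, SimpleGraph.boxProd_adj]
    refine Or.inl ⟨?_, rfl⟩
    simp only [top_adj]
    rw [← h2, hd1]; decide

/-- Any minimal dominating set of `K₂ □ H` has size at most `|W|`. -/
lemma minDom_card_le [Fintype W] (H : SimpleGraph W) {D : Set (Fin 2 × W)}
    (hmin : IsMinDomSet ((⊤ : SimpleGraph (Fin 2)).boxProd H) D) :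
    D.ncard ≤ Fintype.card W := by
  classical
  set G := (⊤ : SimpleGraph (Fin 2)).boxProd H with hG
  -- choose private neighbours for top vertices of full columns
  have hpriv : ∀ d : Fin 2 × W, d ∈ D → d.1 = 1 → ((0 : Fin 2), d.2) ∈ D →
      ∃ v : Fin 2 × W, v ∉ D ∧ v.1 = 1 ∧ ((0 : Fin 2), v.2) ∉ D ∧
        G.Adj d v ∧ ∀ u ∈ D, u ≠ d → ¬ G.Adj u v :=
    fun d hd hd1 hfull => private_neighbor H hmin hd hd1 hfull
  choose! pn hpn1 hpn2 hpn3 hpn4 hpn5 using hpriv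
  set f : Fin 2 × W → W := fun d =>
    if d ∈ D ∧ d.1 = 1 ∧ ((0 : Fin 2), d.2) ∈ D then (pn d).2 else d.2 with hf
  have key : ∀ d ∈ D, d.1 = 1 → ((0 : Fin 2), d.2) ∈ D → True := fun _ _ _ _ => trivial
  have hinj : Set.InjOn f D := by
    intro d1 hd1 d2 hd2 heq
    by_cases h1 : d1 ∈ D ∧ d1.1 = 1 ∧ ((0 : Fin 2), d1.2) ∈ D <;>
      by_cases h2 : d2 ∈ D ∧ d2.1 = 1 ∧ ((0 : Fin 2), d2.2) ∈ D
    · -- both full-top: shared private neighbour forces equality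
      simp only [hf, if_pos h1, if_pos h2] at heq
      have hv : pn d1 = pn d2 :=
        Prod.ext ((hpn2 d1 h1.1 h1.2.1 h1.2.2).trans (hpn2 d2 h2.1 h2.2.1 h2.2.2).symm) heq
      by_contra hne
      exact hpn5 d1 h1.1 h1.2.1 h1.2.2 d2 hd2 (fun h => hne (h.symm ▸ rfl))
        (hv ▸ hpn4 d2 h2.1 h2.2.1 h2.2.2)
    · -- d1 full-top, d2 plain: f d2 is in d2's column which is nonempty, f d1's column empty
      exfalso
      simp only [hf, if_pos h1, if_neg h2] at heq
      rcases fin2_cases d2.1 with h | h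
      · have : d2 = ((0 : Fin 2), (pn d1).2) := Prod.ext h heq.symm
        exact hpn3 d1 h1.1 h1.2.1 h1.2.2 (this ▸ hd2)
      · have : d2 = pn d1 := Prod.ext (h.trans (hpn2 d1 h1.1 h1.2.1 h1.2.2).symm) heq.symm
        exact hpn1 d1 h1.1 h1.2.1 h1.2.2 (this ▸ hd2)
    · exfalso
      simp only [hf, if_neg h1, if_pos h2] at heq
      rcases fin2_cases d1.1 with h | h
      · have : d1 = ((0 : Fin 2), (pn d2).2) := Prod.ext h heq
        exact hpn3 d2 h2.1 h2.2.1 h2.2.2 (this ▸ hd1)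
      · have : d1 = pn d2 := Prod.ext (h.trans (hpn2 d2 h2.1 h2.2.1 h2.2.2).symm) heq
        exact hpn1 d2 h2.1 h2.2.1 h2.2.2 (this ▸ hd1)
    · -- both plain: same column forces equality
      simp only [hf, if_neg h1, if_neg h2] at heq
      by_contra hne
      have hfst : d1.1 ≠ d2.1 := fun h => hne (Prod.ext h heq)
      rcases fin2_cases d1.1 with ha | ha <;> rcases fin2_cases d2.1 with hb | hb
      · exact hfst (ha.trans hb.symm)
      · -- d1 bottom, d2 top: column of d2 is full
        have : ((0 : Fin 2), d2.2) ∈ D := by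
          have : d1 = ((0 : Fin 2), d2.2) := Prod.ext ha heq
          exact this ▸ hd1
        exact h2 ⟨hd2, hb, this⟩
      · have : ((0 : Fin 2), d1.2) ∈ D := by
          have : d2 = ((0 : Fin 2), d1.2) := Prod.ext hb heq.symm
          exact this ▸ hd2
        exact h1 ⟨hd1, ha, this⟩
      · exact hfst (ha.trans hb.symm)
  calc D.ncard ≤ (Set.univ : Set W).ncard :=
        Set.ncard_le_ncard_of_injOn f (fun a _ => Set.mem_univ _) hinj (Set.finite_univ)
    _ = Fintype.card W := by rw [Set.ncard_univ, Nat.card_eq_fintype_card]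

theorem stmt_3 [Fintype W] (H : SimpleGraph W) :
    upperDom ((⊤ : SimpleGraph (Fin 2)).boxProd H) = Fintype.card W := by
  classical
  have hub : ∀ n ∈ {n | ∃ D : Set (Fin 2 × W),
      IsMinDomSet ((⊤ : SimpleGraph (Fin 2)).boxProd H) D ∧ D.ncard = n},
      n ≤ Fintype.card W := by
    rintro n ⟨D, hmin, rfl⟩
    exact minDom_card_le H hmin
  have hmem : Fintype.card W ∈ {n | ∃ D : Set (Fin 2 × W),
      IsMinDomSet ((⊤ : SimpleGraph (Fin 2)).boxProd H) D ∧ D.ncard = n} := by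
    refine ⟨{p : Fin 2 × W | p.1 = 0}, bottom_minDom H, ?_⟩
    have himg : {p : Fin 2 × W | p.1 = 0} = (Prod.mk (0 : Fin 2)) '' Set.univ := by
      ext p
      simp only [Set.mem_setOf_eq, Set.image_univ, Set.mem_range]
      constructor
      · intro h; exact ⟨p.2, Prod.ext h.symm rfl⟩
      · rintro ⟨w, rfl⟩; rfl
    have hinj : Function.Injective (Prod.mk (0 : Fin 2) : W → Fin 2 × W) :=
      fun a b h => congrArg Prod.snd h
    rw [himg, Set.ncard_image_of_injective _ hinj, Set.ncard_univ,
      Nat.card_eq_fintype_card]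
  unfold upperDom
  exact le_antisymm (csSup_le ⟨_, hmem⟩ hub) (le_csSup ⟨Fintype.card W, hub⟩ hmem)
end

section
/- For m ≥ 3 and n ≥ 2, the upper domination number of K_m □ K_{1,n} equals m + n − 2. -/
open SimpleGraph

variable {V : Type*} {W : Type*}

/-- The domination number `γ(G)`: minimum size of a dominating set. -/
noncomputable def domNum (G : SimpleGraph V) : ℕ :=
  sInf {n | ∃ D : Set V, IsDomSet G D ∧ D.ncard = n}

/-- The set of vertices of `D` having a private `D`-neighbor. -/
def privSet (G : SimpleGraph V) (D : Set V) : Set V :=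
  {v ∈ D | ∃ u, u ∉ D ∧ G.Adj v u ∧ ∀ w ∈ D, G.Adj w u → w = v}

/-- `I` is an independent set of `G`. -/
def IsIndep (G : SimpleGraph V) (I : Set V) : Prop :=
  ∀ u ∈ I, ∀ v ∈ I, ¬ G.Adj u v

/-- `I` is a maximal independent set of `G`. -/
def IsMaxIndep (G : SimpleGraph V) (I : Set V) : Prop :=
  IsIndep G I ∧ ∀ J, IsIndep G J → I ⊆ J → J = I

/-- The independence number `α(G)`. -/
noncomputable def indepNum (G : SimpleGraph V) : ℕ :=
  sSup {n | ∃ I : Set V, IsIndep G I ∧ I.ncard = n}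

/-- The star `K_{1,n}` on `Fin (n+1)` with center `0`. -/
def starGraph (n : ℕ) : SimpleGraph (Fin (n + 1)) :=
  SimpleGraph.fromRel (fun i _ => i = 0)

/-- The graph `X_n`: two copies of `K_{n+1}` (on `u_0,…,u_n` and `v_0,…,v_n`)
joined by the matching edges `u_i v_i` for `i ≠ 0`. -/
def Xgraph (n : ℕ) : SimpleGraph (Fin (n + 1) ⊕ Fin (n + 1)) :=
  SimpleGraph.fromRel (fun x y => match x, y with
    | .inl _, .inl _ => True
    | .inr _, .inr _ => True
    | .inl i, .inr j => i = j ∧ i ≠ 0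
    | _, _ => False)

/-- The graph `X_n'`: `X_n` with `u_0` deleted.  Vertices `inl i` represent
`u_{i+1}` (`i : Fin n`) and `inr j` represent `v_j` (`j : Fin (n+1)`); each side
induces a complete graph and `u_{i+1}` is matched to `v_{i+1}`. -/
def Xgraph' (n : ℕ) : SimpleGraph (Fin n ⊕ Fin (n + 1)) :=
  SimpleGraph.fromRel (fun x y => match x, y with
    | .inl _, .inl _ => True
    | .inr _, .inr _ => True
    | .inl i, .inr j => (j : ℕ) = (i : ℕ) + 1
    | _, _ => False)

/-!
Write a vertex of `K_m □ K_{1,n}` as `(i, j)`: `i` is its column (a vertex of `K_m`) and `j` its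
row (a vertex of the star, `0` being the centre). Every vertex `v` of a minimal dominating set `D`
is isolated in `D` or has a private neighbour outside `D`. If `v` has a rowmate in `D`, the rowmate
dominates the rest of the row, so the private neighbour lies in the column of `v`. Off row `0`
this neighbour is `(i, 0)`, so row `0` misses `D` and `v` is alone in its column; in row `0` it
is some `(i, j)` with `j ≠ 0`, and then row `j` misses `D`.

Hence, if some vertex of row `0` has a rowmate, `D` has at most `m` vertices in row `0` (exactly
`m` only if row `0`, which then dominates, is all of `D`) and at most one in each other row but one.
If only vertices off row `0` have rowmates, these lie in distinct columns (all of them only if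
they are all of `D`), and the others lie one per row, avoiding row `0` and a crowded row. If no
vertex has a rowmate, `|D| ≤ n + 1 ≤ m + n - 2`. Column `i₀` outside rows `0, j₁`, together with
row `j₁` outside column `i₀`, is a minimal dominating set of size `m + n - 2`.
-/

section Domination

variable {G : SimpleGraph V} {D : Set V}

lemma IsDomSet.mono {D' : Set V} (hD : IsDomSet G D) (hDD' : D ⊆ D') : IsDomSet G D' := by
  intro v hv
  obtain ⟨u, hu, huv⟩ := hD v fun h => hv (hDD' h)
  exact ⟨u, hDD' hu, huv⟩

lemma isMinDomSet_of_forall_not_isDomSet_diff (hD : IsDomSet G D)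
    (h : ∀ v ∈ D, ¬ IsDomSet G (D \ {v})) : IsMinDomSet G D := by
  refine ⟨hD, fun D' hD' hdom => ?_⟩
  obtain ⟨v, hv, hvD'⟩ := Set.exists_of_ssubset hD'
  exact h v hv (hdom.mono fun u hu => ⟨hD'.subset hu, fun huv => hvD' (huv ▸ hu)⟩)

lemma IsMinDomSet.eq_of_isDomSet_of_subset {S : Set V} (hD : IsMinDomSet G D)
    (hS : IsDomSet G S) (hSD : S ⊆ D) : S = D := by
  by_contra hne
  exact hD.2 S (hSD.ssubset_of_ne hne) hS

lemma IsMinDomSet.mem_privSet (hD : IsMinDomSet G D) {v w : V} (hv : v ∈ D) (hw : w ∈ D)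
    (hwv : G.Adj w v) : v ∈ privSet G D := by
  have hnot : ¬ IsDomSet G (D \ {v}) := hD.2 _ (Set.sdiff_singleton_ssubset.2 hv)
  simp only [IsDomSet, not_forall, not_exists, not_and] at hnot
  obtain ⟨p, hp, hpriv⟩ := hnot
  have hother : ∀ u ∈ D, u ≠ v → ¬ G.Adj u p := fun u hu huv => hpriv u ⟨hu, huv⟩
  have hpD : p ∉ D := by
    intro hpD
    obtain rfl : p = v := by simpa [hpD] using hp
    exact hother w hw hwv.ne hwv
  obtain ⟨u, hu, hup⟩ := hD.1 p hpD
  obtain rfl : u = v := by_contra fun huv => hother u hu huv hup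
  exact ⟨hv, p, hpD, hup, fun u' hu' hu'p => by_contra fun h => hother u' hu' h hu'p⟩

lemma upperDom_eq {k : ℕ} (hex : ∃ D : Set V, IsMinDomSet G D ∧ D.ncard = k)
    (hle : ∀ D : Set V, IsMinDomSet G D → D.ncard ≤ k) : upperDom G = k :=
  IsGreatest.csSup_eq ⟨hex, by rintro _ ⟨D, hD, rfl⟩; exact hle D hD⟩

end Domination

abbrev completeBoxStar (m n : ℕ) : SimpleGraph (Fin m × Fin (n + 1)) :=
  (⊤ : SimpleGraph (Fin m)).boxProd (_root_.starGraph n)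

def HasRowmate {α β : Type*} (D : Set (α × β)) (v : α × β) : Prop :=
  ∃ w ∈ D, w ≠ v ∧ w.2 = v.2

section CompleteBoxStar

variable {m n : ℕ}

lemma completeBoxStar_adj {x y : Fin m × Fin (n + 1)} :
    (completeBoxStar m n).Adj x y ↔
      (x.1 ≠ y.1 ∧ x.2 = y.2) ∨ (x.1 = y.1 ∧ x.2 ≠ y.2 ∧ (x.2 = 0 ∨ y.2 = 0)) := by
  simp only [completeBoxStar, boxProd_adj, top_adj, _root_.starGraph, fromRel_adj]
  tauto

lemma completeBoxStar_adj_of_snd_eq {x y : Fin m × Fin (n + 1)} (h₁ : x.1 ≠ y.1)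
    (h₂ : x.2 = y.2) : (completeBoxStar m n).Adj x y :=
  completeBoxStar_adj.2 (Or.inl ⟨h₁, h₂⟩)

lemma completeBoxStar_adj_zero (i : Fin m) {j : Fin (n + 1)} (hj : j ≠ 0) :
    (completeBoxStar m n).Adj (i, 0) (i, j) :=
  completeBoxStar_adj.2 (Or.inr ⟨rfl, hj.symm, Or.inl rfl⟩)

variable {D : Set (Fin m × Fin (n + 1))} (hD : IsMinDomSet (completeBoxStar m n) D)
  {v : Fin m × Fin (n + 1)} (hv : v ∈ D) (hvr : HasRowmate D v)
include hD hv hvr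

/-- A rowmate dominates the rest of the row, so the private neighbour lies in the column. -/
lemma exists_private_in_column : ∃ j, v.2 ≠ j ∧ (v.2 = 0 ∨ j = 0) ∧ (v.1, j) ∉ D ∧
    ∀ u ∈ D, (completeBoxStar m n).Adj u (v.1, j) → u = v := by
  obtain ⟨w, hw, hwv, hrow⟩ := hvr
  have hcol : w.1 ≠ v.1 := fun h => hwv (Prod.ext h hrow)
  obtain ⟨-, p, hpD, hvp, hpriv⟩ :=
    hD.mem_privSet hv hw (completeBoxStar_adj_of_snd_eq hcol hrow)
  rcases completeBoxStar_adj.1 hvp with ⟨-, hvp₂⟩ | ⟨hvp₁, hvp₂, h0⟩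
  · have hwp : w.1 ≠ p.1 := fun h =>
      hpD ((Prod.ext h.symm (hvp₂.symm.trans hrow.symm) : p = w) ▸ hw)
    exact absurd (hpriv w hw (completeBoxStar_adj_of_snd_eq hwp (hrow.trans hvp₂))) hwv
  · obtain ⟨p₁, p₂⟩ := p
    obtain rfl : p₁ = v.1 := hvp₁.symm
    exact ⟨p₂, hvp₂, h0, hpD, hpriv⟩

lemma snd_ne_zero_of_hasRowmate (hv0 : v.2 ≠ 0) : ∀ u ∈ D, u.2 ≠ 0 := by
  obtain ⟨j, -, hj, hpD, hpriv⟩ := exists_private_in_column hD hv hvr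
  obtain rfl : j = 0 := hj.resolve_left hv0
  intro u hu hu0
  by_cases hu₁ : u.1 = v.1
  · exact hpD ((Prod.ext hu₁ hu0 : u = (v.1, 0)) ▸ hu)
  · exact hv0 (hpriv u hu (completeBoxStar_adj_of_snd_eq hu₁ hu0) ▸ hu0)

lemma eq_of_fst_eq_of_hasRowmate (hv0 : v.2 ≠ 0) : ∀ u ∈ D, u.1 = v.1 → u = v := by
  obtain ⟨j, -, hj, hpD, hpriv⟩ := exists_private_in_column hD hv hvr
  obtain rfl : j = 0 := hj.resolve_left hv0
  rintro ⟨u₁, u₂⟩ hu (rfl : u₁ = v.1)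
  by_cases hu0 : u₂ = 0
  · exact absurd (hu0 ▸ hu) hpD
  · exact hpriv _ hu (completeBoxStar_adj_zero v.1 hu0).symm

lemma exists_snd_ne_of_hasRowmate (hv0 : v.2 = 0) : ∃ j ≠ 0, ∀ u ∈ D, u.2 ≠ j := by
  obtain ⟨j, hvj, -, hpD, hpriv⟩ := exists_private_in_column hD hv hvr
  refine ⟨j, hv0 ▸ hvj.symm, fun u hu huj => ?_⟩
  by_cases hu₁ : u.1 = v.1
  · exact hpD ((Prod.ext hu₁ huj : u = (v.1, j)) ▸ hu)
  · exact hvj (hpriv u hu (completeBoxStar_adj_of_snd_eq hu₁ huj) ▸ huj)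

end CompleteBoxStar

section Counting

open Finset

variable {α : Type*} {m n : ℕ}

lemma card_le_of_injOn_fst {S : Finset (Fin m × α)}
    (h : Set.InjOn Prod.fst (S : Set (Fin m × α))) : S.card ≤ m := by
  simpa using card_le_card_of_injOn Prod.fst (fun _ _ => mem_univ _) h

lemma exists_mem_fst_eq_of_injOn {S : Finset (Fin m × α)}
    (h : Set.InjOn Prod.fst (S : Set (Fin m × α))) (hS : S.card = m) (i : Fin m) :
    ∃ v ∈ S, v.1 = i := by
  have himage : S.image Prod.fst = univ :=
    eq_univ_of_card _ (by rw [card_image_of_injOn h, hS, Fintype.card_fin])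
  exact mem_image.1 (by rw [himage]; exact mem_univ i)

lemma card_le_of_injOn_snd {S : Finset (α × Fin (n + 1))}
    (h : Set.InjOn Prod.snd (S : Set (α × Fin (n + 1)))) {j₁ j₂ : Fin (n + 1)} (hj : j₁ ≠ j₂)
    (h₁ : ∀ v ∈ S, v.2 ≠ j₁) (h₂ : ∀ v ∈ S, v.2 ≠ j₂) : S.card ≤ n - 1 :=
  calc S.card ≤ ({j₁, j₂}ᶜ : Finset (Fin (n + 1))).card :=
        card_le_card_of_injOn Prod.snd (fun v hv => by simp [h₁ v hv, h₂ v hv]) h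
    _ = n - 1 := by rw [card_compl, card_pair hj, Fintype.card_fin]; omega

end Counting

section UpperBound

open Finset

variable {m n : ℕ} {D : Finset (Fin m × Fin (n + 1))}
  (hD : IsMinDomSet (completeBoxStar m n) ↑D)
include hD

lemma card_le_of_hasRowmate_of_snd_eq_zero (hn : 2 ≤ n) {v : Fin m × Fin (n + 1)} (hv : v ∈ D)
    (hv0 : v.2 = 0) (hvr : HasRowmate ↑D v) : D.card ≤ m + n - 2 := by
  set H := D.filter (·.2 = 0)
  have hHD : H ⊆ D := filter_subset _ D
  have hrestD : ∀ x ∈ D \ H, x ∈ D ∧ x.2 ≠ 0 := fun x hx =>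
    ⟨(mem_sdiff.1 hx).1, fun h => (mem_sdiff.1 hx).2 (mem_filter.2 ⟨(mem_sdiff.1 hx).1, h⟩)⟩
  obtain ⟨j, hj0, hj⟩ := exists_snd_ne_of_hasRowmate hD hv hvr hv0
  have hHinj : Set.InjOn Prod.fst (H : Set (Fin m × Fin (n + 1))) := fun x hx y hy hxy =>
    Prod.ext hxy ((mem_filter.1 hx).2.trans (mem_filter.1 hy).2.symm)
  have hrest : (D \ H).card ≤ n - 1 := by
    refine card_le_of_injOn_snd ?_ hj0.symm (fun x hx => (hrestD x hx).2)
      fun x hx => hj x (hrestD x hx).1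
    intro x hx y hy hxy
    by_contra hne
    obtain ⟨hxD, hx0⟩ := hrestD x hx
    exact snd_ne_zero_of_hasRowmate hD hxD ⟨y, (hrestD y hy).1, Ne.symm hne, hxy.symm⟩ hx0
      v hv hv0
  have hfull : H.card = m → H = D := by
    intro hHm
    have hdom : IsDomSet (completeBoxStar m n) ↑H := by
      intro x hx
      obtain ⟨u, hu, hu₁⟩ := exists_mem_fst_eq_of_injOn hHinj hHm x.1
      have hux : u = (x.1, 0) := Prod.ext hu₁ (mem_filter.1 hu).2
      have hx0 : x.2 ≠ 0 := fun h =>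
        hx (by rwa [← Prod.ext hu₁ ((mem_filter.1 hu).2.trans h.symm)])
      exact ⟨u, hu, hux ▸ completeBoxStar_adj_zero x.1 hx0⟩
    exact_mod_cast hD.eq_of_isDomSet_of_subset hdom (coe_subset.2 hHD)
  have hsplit := card_sdiff_add_card_eq_card hHD
  rcases (card_le_of_injOn_fst hHinj).lt_or_eq with hlt | heq
  · omega
  · rw [← hfull heq]; omega

lemma card_le_of_hasRowmate (hn : 2 ≤ n) (h0 : ∀ v ∈ D, v.2 = 0 → ¬ HasRowmate ↑D v)
    {v : Fin m × Fin (n + 1)} (hv : v ∈ D) (hvr : HasRowmate ↑D v) : D.card ≤ m + n - 2 := by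
  classical
  set H := D.filter (HasRowmate ↑D)
  have hHD : H ⊆ D := filter_subset _ D
  have hne0 : ∀ u ∈ H, u.2 ≠ 0 := fun u hu hu0 =>
    h0 u (mem_filter.1 hu).1 hu0 (mem_filter.1 hu).2
  have hexcl : ∀ u ∈ H, ∀ w ∈ D, w.1 = u.1 → w = u := fun u hu =>
    eq_of_fst_eq_of_hasRowmate hD (mem_filter.1 hu).1 (mem_filter.1 hu).2 (hne0 u hu)
  have hvH : v ∈ H := mem_filter.2 ⟨hv, hvr⟩
  have hrestD : ∀ x ∈ D \ H, x ∈ D ∧ ¬ HasRowmate ↑D x := fun x hx =>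
    ⟨(mem_sdiff.1 hx).1, fun h => (mem_sdiff.1 hx).2 (mem_filter.2 ⟨(mem_sdiff.1 hx).1, h⟩)⟩
  have hHinj : Set.InjOn Prod.fst (H : Set (Fin m × Fin (n + 1))) := fun x hx y hy hxy =>
    hexcl y hy x (mem_filter.1 hx).1 hxy
  have hrest : (D \ H).card ≤ n - 1 := by
    refine card_le_of_injOn_snd ?_ (hne0 v hvH).symm
      (fun x hx => snd_ne_zero_of_hasRowmate hD hv hvr (hne0 v hvH) x (hrestD x hx).1) ?_
    · intro x hx y hy hxy
      by_contra hne
      exact (hrestD x hx).2 ⟨y, (hrestD y hy).1, Ne.symm hne, hxy.symm⟩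
    · intro x hx hxv
      refine (hrestD x hx).2 ?_
      rcases eq_or_ne x v with rfl | hne
      · exact hvr
      · exact ⟨v, hv, hne.symm, hxv.symm⟩
  have hfull : H.card = m → H = D := fun hHm => hHD.antisymm fun w hw => by
    obtain ⟨u, hu, hu₁⟩ := exists_mem_fst_eq_of_injOn hHinj hHm w.1
    rwa [hexcl u hu w hw hu₁.symm]
  have hsplit := card_sdiff_add_card_eq_card hHD
  rcases (card_le_of_injOn_fst hHinj).lt_or_eq with hlt | heq
  · omega
  · rw [← hfull heq]; omega

theorem card_le_of_isMinDomSet (hm : 3 ≤ m) (hn : 2 ≤ n) : D.card ≤ m + n - 2 := by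
  by_cases hrow0 : ∃ v ∈ D, v.2 = 0 ∧ HasRowmate ↑D v
  · obtain ⟨v, hv, hv0, hvr⟩ := hrow0
    exact card_le_of_hasRowmate_of_snd_eq_zero hD hn hv hv0 hvr
  push Not at hrow0
  by_cases hrow : ∃ v ∈ D, HasRowmate ↑D v
  · obtain ⟨v, hv, hvr⟩ := hrow
    exact card_le_of_hasRowmate hD hn hrow0 hv hvr
  push Not at hrow
  have hinj : Set.InjOn Prod.snd (D : Set (Fin m × Fin (n + 1))) := fun x hx y hy hxy =>
    by_contra fun hne => hrow x hx ⟨y, hy, Ne.symm hne, hxy.symm⟩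
  have := card_le_card_of_injOn Prod.snd (fun _ _ => mem_univ _) hinj
  rw [card_univ, Fintype.card_fin] at this
  omega

end UpperBound

section LowerBound

open Finset

variable {m n : ℕ} {i₀ : Fin m} {j₁ : Fin (n + 1)}

def crossSet (i₀ : Fin m) (j₁ : Fin (n + 1)) : Finset (Fin m × Fin (n + 1)) :=
  {i₀} ×ˢ {0, j₁}ᶜ ∪ {i₀}ᶜ ×ˢ {j₁}

lemma mem_crossSet {v : Fin m × Fin (n + 1)} : v ∈ crossSet i₀ j₁ ↔
    (v.1 = i₀ ∧ v.2 ≠ 0 ∧ v.2 ≠ j₁) ∨ (v.1 ≠ i₀ ∧ v.2 = j₁) := by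
  simp only [crossSet, mem_union, mem_product, mem_singleton, mem_compl, mem_insert, not_or]

lemma card_crossSet (hj₁ : j₁ ≠ 0) : (crossSet i₀ j₁).card = m + n - 2 := by
  have hm : 0 < m := i₀.pos
  have hn : 0 < n := by have := Fin.val_ne_zero_iff.2 hj₁; omega
  rw [crossSet, card_union_of_disjoint (disjoint_product.2 (Or.inl disjoint_compl_right)),
    card_product, card_product, card_compl, card_compl, card_pair hj₁.symm]
  simp only [card_singleton, Fintype.card_fin]
  omega

lemma isDomSet_crossSet {i₁ : Fin m} (hi₁ : i₁ ≠ i₀) {j₂ : Fin (n + 1)} (hj₂ : j₂ ≠ 0)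
    (hj₂₁ : j₂ ≠ j₁) : IsDomSet (completeBoxStar m n) ↑(crossSet i₀ j₁) := by
  rintro ⟨i, j⟩ hx
  simp only [mem_coe, mem_crossSet, not_or, not_and, not_not] at hx
  by_cases hj : j = j₁
  · obtain rfl : i = i₀ := by_contra fun hi => hx.2 hi hj
    exact ⟨(i₁, j), mem_crossSet.2 (Or.inr ⟨hi₁, hj⟩), completeBoxStar_adj_of_snd_eq hi₁ rfl⟩
  by_cases hj0 : j = 0
  · subst hj0
    by_cases hi : i = i₀
    · subst hi
      exact ⟨(i, j₂), mem_crossSet.2 (Or.inl ⟨rfl, hj₂, hj₂₁⟩),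
        (completeBoxStar_adj_zero i hj₂).symm⟩
    · exact ⟨(i, j₁), mem_crossSet.2 (Or.inr ⟨hi, rfl⟩),
        (completeBoxStar_adj_zero i (Ne.symm hj)).symm⟩
  · have hi : i ≠ i₀ := fun hi => hj (hx.1 hi hj0)
    exact ⟨(i₀, j), mem_crossSet.2 (Or.inl ⟨rfl, hj0, hj⟩),
      completeBoxStar_adj_of_snd_eq (Ne.symm hi) rfl⟩

/-- The vertices `(i₀, j)` of `crossSet i₀ j₁` are isolated in it, and `(i, j₁)` is the only
neighbour of `(i, 0)` in it. -/
lemma not_isDomSet_crossSet_diff (hj₁ : j₁ ≠ 0) {v : Fin m × Fin (n + 1)}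
    (hv : v ∈ crossSet i₀ j₁) : ¬ IsDomSet (completeBoxStar m n) (↑(crossSet i₀ j₁) \ {v}) := by
  intro hdom
  rcases mem_crossSet.1 hv with ⟨hv₁, hv0, hvj₁⟩ | ⟨hv₁, hvj₁⟩
  · obtain ⟨u, ⟨hu, huv⟩, hadj⟩ := hdom v fun h => h.2 rfl
    rcases mem_crossSet.1 hu, completeBoxStar_adj.1 hadj with
      ⟨⟨hu₁, hu0, -⟩ | ⟨hu₁, huj₁⟩, ⟨hne, hsnd⟩ | ⟨hcol, -, h0⟩⟩
    · exact hne (hu₁.trans hv₁.symm)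
    · exact h0.elim hu0 hv0
    · exact hvj₁ (hsnd ▸ huj₁)
    · exact hu₁ (hcol.trans hv₁)
  · have hp : (v.1, 0) ∉ (crossSet i₀ j₁ : Set (Fin m × Fin (n + 1))) \ {v} := fun h => by
      rcases mem_crossSet.1 h.1 with ⟨-, h0, -⟩ | ⟨-, h0⟩
      · exact h0 rfl
      · exact hj₁ h0.symm
    obtain ⟨u, ⟨hu, huv⟩, hadj⟩ := hdom _ hp
    rcases mem_crossSet.1 hu, completeBoxStar_adj.1 hadj with
      ⟨⟨hu₁, hu0, -⟩ | ⟨-, huj₁⟩, ⟨-, hsnd⟩ | ⟨hcol, -, -⟩⟩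
    · exact hu0 hsnd
    · exact hv₁ (hcol.symm.trans hu₁)
    · exact hj₁ (huj₁.symm.trans hsnd)
    · exact huv (Prod.ext hcol (huj₁.trans hvj₁.symm))

lemma exists_isMinDomSet_ncard_eq (hm : 2 ≤ m) (hn : 2 ≤ n) : ∃ D : Set (Fin m × Fin (n + 1)),
    IsMinDomSet (completeBoxStar m n) D ∧ D.ncard = m + n - 2 := by
  obtain ⟨i₀, i₁, hi₁⟩ : ∃ i₀ i₁ : Fin m, i₁ ≠ i₀ :=
    ⟨⟨0, by omega⟩, ⟨1, by omega⟩, by simp⟩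
  obtain ⟨j₁, j₂, hj₁, hj₂, hj₂₁⟩ : ∃ j₁ j₂ : Fin (n + 1), j₁ ≠ 0 ∧ j₂ ≠ 0 ∧ j₂ ≠ j₁ :=
    ⟨⟨1, by omega⟩, ⟨2, by omega⟩, by simp [Fin.ext_iff]⟩
  exact ⟨_, isMinDomSet_of_forall_not_isDomSet_diff (isDomSet_crossSet hi₁ hj₂ hj₂₁)
    fun v hv => not_isDomSet_crossSet_diff hj₁ hv, by rw [Set.ncard_coe_finset, card_crossSet hj₁]⟩

end LowerBound

theorem stmt_4 (m n : ℕ) (hm : 3 ≤ m) (hn : 2 ≤ n) :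
    upperDom ((⊤ : SimpleGraph (Fin m)).boxProd (_root_.starGraph n)) = m + n - 2 := by
  refine upperDom_eq (exists_isMinDomSet_ncard_eq (by omega) hn) fun D hD => ?_
  obtain ⟨D, rfl⟩ := D.toFinite.exists_finset_coe
  rw [Set.ncard_coe_finset]
  exact card_le_of_isMinDomSet hD hm hn
end

section
/- For l, m, n ≥ 2, the upper domination number of K_l □ K_{m,n} equals max{m+n, 2l, m+l−2, n+l−2}. -/
open SimpleGraph

variable {V : Type*} {W : Type*}

lemma isMinDomSet_of_private {G : SimpleGraph V} {D : Set V}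
    (hdom : IsDomSet G D)
    (hpriv : ∀ v ∈ D, ∃ w, w ∉ D \ {v} ∧ ∀ u ∈ D \ {v}, ¬ G.Adj u w) :
    IsMinDomSet G D := by
  refine ⟨hdom, ?_⟩
  intro D' hsub hdom'
  obtain ⟨hss, hne⟩ := Set.ssubset_iff_subset_ne.mp hsub
  obtain ⟨v, hvD, hvD'⟩ : ∃ v, v ∈ D ∧ v ∉ D' := by
    by_contra h
    push_neg at h
    exact hne (Set.Subset.antisymm hss h)
  obtain ⟨w, hw1, hw2⟩ := hpriv v hvD
  have hsub' : D' ⊆ D \ {v} := fun u hu => ⟨hss hu, fun h => hvD' (h ▸ hu)⟩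
  have hwD' : w ∉ D' := fun h => hw1 (hsub' h)
  obtain ⟨u, huD', hadj⟩ := hdom' w hwD'
  exact hw2 u (hsub' huD') hadj

lemma private_of_isMinDomSet {G : SimpleGraph V} {D : Set V} (h : IsMinDomSet G D)
    {v : V} (hv : v ∈ D) :
    ∃ w, (w = v ∨ G.Adj v w) ∧ w ∉ D \ {v} ∧ ∀ u ∈ D \ {v}, ¬ G.Adj u w := by
  have hss : D \ {v} ⊂ D := Set.sdiff_singleton_ssubset.mpr hv
  have hnd := h.2 _ hss
  unfold IsDomSet at hnd
  push_neg at hnd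
  obtain ⟨w, hw1, hw2⟩ := hnd
  refine ⟨w, ?_, hw1, hw2⟩
  by_cases hwv : w = v
  · exact Or.inl hwv
  · have hwD : w ∉ D := fun hD => hw1 ⟨hD, hwv⟩
    obtain ⟨u, huD, hadj⟩ := h.1 w hwD
    have huv : u = v := by
      by_contra hne
      exact (hw2 u ⟨huD, hne⟩ hadj).elim
    exact Or.inr (huv ▸ hadj)

abbrev GG (l m n : ℕ) : SimpleGraph (Fin l × (Fin m ⊕ Fin n)) :=
  (⊤ : SimpleGraph (Fin l)).boxProd (completeBipartiteGraph (Fin m) (Fin n))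

section KK
variable {l m n : ℕ} {D : Set (Fin l × (Fin m ⊕ Fin n))}

lemma L1 (h : IsMinDomSet (GG l m n) D) {i : Fin l} {x : Fin m}
    (hv : (i, Sum.inl x) ∈ D) :
    ((∀ k, (k, Sum.inl x) ∈ D → k = i) ∧ ∃ j, ∀ y : Fin n, (j, Sum.inr y) ∉ D) ∨
    ((∀ x', (i, Sum.inl x') ∈ D → x' = x) ∧ ∃ y : Fin n, ∀ k, (k, Sum.inr y) ∉ D) := by
  obtain ⟨w, hw0, hw1, hw2⟩ := private_of_isMinDomSet h hv
  obtain ⟨j, c⟩ := w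
  rcases hw0 with heq | hadj
  · -- w = v
    have hj : j = i := congrArg Prod.fst heq
    have hc : c = Sum.inl x := congrArg Prod.snd heq
    subst hc; subst hj
    left
    constructor
    · intro k hk
      by_contra hki
      exact hw2 (k, Sum.inl x) ⟨hk, by simp [Prod.ext_iff, hki]⟩ (by simp [boxProd_adj, hki])
    · refine ⟨j, fun y hy => ?_⟩
      exact hw2 (j, Sum.inr y) ⟨hy, by simp⟩ (by simp [boxProd_adj])
  · rw [boxProd_adj] at hadj
    rcases hadj with ⟨hne, hc⟩ | ⟨hbip, hij⟩
    · -- w = (j, inl x), j ≠ i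
      simp only [top_adj] at hne
      subst hc
      have hwD : (j, Sum.inl x) ∉ D := fun hD =>
        hw1 ⟨hD, by simp [Prod.ext_iff]; intro h'; exact absurd h'.symm hne⟩
      left
      constructor
      · intro k hk
        by_contra hki
        have hkj : k ≠ j := fun h => hwD (h ▸ hk)
        exact hw2 (k, Sum.inl x) ⟨hk, by simp [Prod.ext_iff, hki]⟩
          (by simp [boxProd_adj, hkj])
      · refine ⟨j, fun y hy => ?_⟩
        have : (j, Sum.inr y) ≠ (i, Sum.inl x) := by simp
        exact hw2 (j, Sum.inr y) ⟨hy, this⟩ (by simp [boxProd_adj])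
    · -- w = (i, c), bip adjacency
      simp only at hij
      subst hij
      obtain ⟨y, rfl⟩ : ∃ y, c = Sum.inr y := by
        rcases c with x' | y
        · simp at hbip
        · exact ⟨y, rfl⟩
      have hwD : (i, Sum.inr y) ∉ D := fun hD => hw1 ⟨hD, by simp⟩
      right
      constructor
      · intro x' hx'
        by_contra hxx
        exact hw2 (i, Sum.inl x') ⟨hx', by simp [hxx]⟩ (by simp [boxProd_adj])
      · refine ⟨y, fun k hk => ?_⟩
        by_cases hki : k = i
        · exact hwD (hki ▸ hk)
        · exact hw2 (k, Sum.inr y) ⟨hk, by simp [Prod.ext_iff, hki]⟩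
            (by simp [boxProd_adj, hki])

lemma L1r (h : IsMinDomSet (GG l m n) D) {i : Fin l} {y : Fin n}
    (hv : (i, Sum.inr y) ∈ D) :
    ((∀ k, (k, Sum.inr y) ∈ D → k = i) ∧ ∃ j, ∀ x : Fin m, (j, Sum.inl x) ∉ D) ∨
    ((∀ y', (i, Sum.inr y') ∈ D → y' = y) ∧ ∃ x : Fin m, ∀ k, (k, Sum.inl x) ∉ D) := by
  obtain ⟨w, hw0, hw1, hw2⟩ := private_of_isMinDomSet h hv
  obtain ⟨j, c⟩ := w
  rcases hw0 with heq | hadj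
  · have hj : j = i := congrArg Prod.fst heq
    have hc : c = Sum.inr y := congrArg Prod.snd heq
    subst hc; subst hj
    left
    constructor
    · intro k hk
      by_contra hki
      exact hw2 (k, Sum.inr y) ⟨hk, by simp [Prod.ext_iff, hki]⟩ (by simp [boxProd_adj, hki])
    · refine ⟨j, fun x hx => ?_⟩
      exact hw2 (j, Sum.inl x) ⟨hx, by simp⟩ (by simp [boxProd_adj])
  · rw [boxProd_adj] at hadj
    rcases hadj with ⟨hne, hc⟩ | ⟨hbip, hij⟩
    · simp only [top_adj] at hne
      subst hc
      have hwD : (j, Sum.inr y) ∉ D := fun hD =>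
        hw1 ⟨hD, by simp [Prod.ext_iff]; intro h'; exact absurd h'.symm hne⟩
      left
      constructor
      · intro k hk
        by_contra hki
        have hkj : k ≠ j := fun h => hwD (h ▸ hk)
        exact hw2 (k, Sum.inr y) ⟨hk, by simp [Prod.ext_iff, hki]⟩
          (by simp [boxProd_adj, hkj])
      · refine ⟨j, fun x hx => ?_⟩
        have : (j, Sum.inl x) ≠ (i, Sum.inr y) := by simp
        exact hw2 (j, Sum.inl x) ⟨hx, this⟩ (by simp [boxProd_adj])
    · simp only at hij
      subst hij
      obtain ⟨x, rfl⟩ : ∃ x, c = Sum.inl x := by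
        rcases c with x | y'
        · exact ⟨x, rfl⟩
        · simp at hbip
      have hwD : (i, Sum.inl x) ∉ D := fun hD => hw1 ⟨hD, by simp⟩
      right
      constructor
      · intro y' hy'
        by_contra hyy
        exact hw2 (i, Sum.inr y') ⟨hy', by simp [hyy]⟩ (by simp [boxProd_adj])
      · refine ⟨x, fun k hk => ?_⟩
        by_cases hki : k = i
        · exact hwD (hki ▸ hk)
        · exact hw2 (k, Sum.inl x) ⟨hk, by simp [Prod.ext_iff, hki]⟩
            (by simp [boxProd_adj, hki])

lemma L2 (h : IsDomSet (GG l m n) D) {y : Fin n} (hy : ∀ k, (k, Sum.inr y) ∉ D) (i : Fin l) :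
    ∃ x, (i, Sum.inl x) ∈ D := by
  obtain ⟨u, huD, hadj⟩ := h (i, Sum.inr y) (hy i)
  obtain ⟨k, c⟩ := u
  rw [boxProd_adj] at hadj
  rcases hadj with ⟨hne, hc⟩ | ⟨hbip, hik⟩
  · simp only at hc; subst hc
    exact absurd huD (hy k)
  · simp only at hik; subst hik
    rcases c with x | y'
    · exact ⟨x, huD⟩
    · simp at hbip

lemma L2r (h : IsDomSet (GG l m n) D) {x : Fin m} (hx : ∀ k, (k, Sum.inl x) ∉ D) (i : Fin l) :
    ∃ y, (i, Sum.inr y) ∈ D := by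
  obtain ⟨u, huD, hadj⟩ := h (i, Sum.inl x) (hx i)
  obtain ⟨k, c⟩ := u
  rw [boxProd_adj] at hadj
  rcases hadj with ⟨hne, hc⟩ | ⟨hbip, hik⟩
  · simp only at hc; subst hc
    exact absurd huD (hx k)
  · simp only at hik; subst hik
    rcases c with x' | y
    · simp at hbip
    · exact ⟨y, huD⟩

end KK
section UB
variable {l m n : ℕ} {D : Set (Fin l × (Fin m ⊕ Fin n))}

lemma ncard_compl_singleton' {α : Type*} [Fintype α] (a : α) :
    ({a}ᶜ : Set α).ncard = Nat.card α - 1 := by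
  have h := Set.ncard_add_ncard_compl ({a} : Set α)
  rw [Set.ncard_singleton] at h
  omega

lemma upper_bound (hl : 2 ≤ l) (hm : 2 ≤ m) (hn : 2 ≤ n)
    (h : IsMinDomSet (GG l m n) D) :
    D.ncard ≤ max (m + n) (max (2 * l) (max (m + l - 2) (n + l - 2))) := by
  have hmn : Nat.card (Fin m ⊕ Fin n) = m + n := by
    simp [Nat.card_eq_fintype_card]
  by_cases hEL : ∃ x : Fin m, ∀ k, (k, Sum.inl x) ∉ D
  · by_cases hER : ∃ y : Fin n, ∀ k, (k, Sum.inr y) ∉ D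
    · -- Case 4: both sides have empty columns; every row has exactly one of each
      obtain ⟨x₀, hx₀⟩ := hEL
      obtain ⟨y₀, hy₀⟩ := hER
      have hA : ∀ i, ∃ x, (i, Sum.inl x) ∈ D := L2 h.1 hy₀
      have hB : ∀ i, ∃ y, (i, Sum.inr y) ∈ D := L2r h.1 hx₀
      have keyL : ∀ i x x', (i, Sum.inl x) ∈ D → (i, Sum.inl x') ∈ D → x = x' := by
        intro i x x' hx hx'
        rcases L1 h hx with ⟨_, j, hj⟩ | ⟨hs, _⟩
        · obtain ⟨y, hy⟩ := hB j; exact absurd hy (hj y)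
        · exact (hs x' hx').symm
      have keyR : ∀ i y y', (i, Sum.inr y) ∈ D → (i, Sum.inr y') ∈ D → y = y' := by
        intro i y y' hy hy'
        rcases L1r h hy with ⟨_, j, hj⟩ | ⟨hs, _⟩
        · obtain ⟨x, hx⟩ := hA j; exact absurd hx (hj x)
        · exact (hs y' hy').symm
      have hinj : Set.InjOn (fun v : Fin l × (Fin m ⊕ Fin n) => (v.1, v.2.isLeft)) D := by
        rintro ⟨i, c⟩ hu ⟨i', c'⟩ hu' he
        simp only [Prod.mk.injEq] at he
        obtain ⟨rfl, hc⟩ := he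
        rcases c with x | y <;> rcases c' with x' | y' <;> simp_all
        · exact keyL i x x' hu hu'
        · exact keyR i y y' hu hu'
      have hle := Set.ncard_le_ncard_of_injOn _ (fun a _ => Set.mem_univ _) hinj
        (Set.finite_univ (α := Fin l × Bool))
      rw [Set.ncard_univ] at hle
      have : Nat.card (Fin l × Bool) = 2 * l := by
        simp [Nat.card_eq_fintype_card]; ring
      omega
    · -- Case 3: empty left column, no empty right column
      push_neg at hER
      have hB : ∀ i, ∃ y, (i, Sum.inr y) ∈ D := L2r h.1 hEL.choose_spec
      have hnoL : ∀ i x, (i, Sum.inl x) ∉ D := by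
        intro i x hx
        rcases L1 h hx with ⟨_, j, hj⟩ | ⟨_, y, hy⟩
        · obtain ⟨y, hy⟩ := hB j; exact hj y hy
        · obtain ⟨k, hk⟩ := hER y; exact hy k hk
      have key : ∀ i y, (i, Sum.inr y) ∈ D →
          (∀ k, (k, Sum.inr y) ∈ D → k = i) ∨ (∀ y', (i, Sum.inr y') ∈ D → y' = y) := by
        intro i y hy
        rcases L1r h hy with ⟨hs, _⟩ | ⟨hs, x, hx⟩
        · exact Or.inl hs
        · exact Or.inr hs
      -- P = rows with ≥ 2 right vertices
      set P : Set (Fin l) := {i | ∃ y y', y ≠ y' ∧ (i, Sum.inr y) ∈ D ∧ (i, Sum.inr y') ∈ D}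
        with hPdef
      have hProw : ∀ i ∈ P, ∀ y, (i, Sum.inr y) ∈ D → ∀ k, (k, Sum.inr y) ∈ D → k = i := by
        intro i hi y hy
        rcases key i y hy with hc | hr
        · exact hc
        · obtain ⟨y₁, y₂, hne, h1, h2⟩ := hi
          exact absurd ((hr y₁ h1).trans (hr y₂ h2).symm) hne
      have hnProw : ∀ i ∉ P, ∀ y y', (i, Sum.inr y) ∈ D → (i, Sum.inr y') ∈ D → y = y' := by
        intro i hi y y' hy hy'
        by_contra hne
        exact hi ⟨y, y', hne, hy, hy'⟩
      by_cases hP1 : ∀ i, i ∈ P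
      · -- inject by column
        have hinj : Set.InjOn Prod.snd D := by
          rintro ⟨i, c⟩ hu ⟨i', c'⟩ hu' he
          simp only at he
          subst he
          rcases c with x | y
          · exact absurd hu (hnoL i x)
          · have := hProw i' (hP1 i') y hu' i hu
            simp [this]
        have hle := Set.ncard_le_ncard_of_injOn _ (fun a _ => Set.mem_univ _) hinj
          (Set.finite_univ (α := Fin m ⊕ Fin n))
        rw [Set.ncard_univ, hmn] at hle
        omega
      · by_cases hP0 : ∀ i, i ∉ P
        · -- inject by row
          have hinj : Set.InjOn Prod.fst D := by
            rintro ⟨i, c⟩ hu ⟨i', c'⟩ hu' he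
            simp only at he
            subst he
            rcases c with x | y
            · exact absurd hu (hnoL i x)
            · rcases c' with x' | y'
              · exact absurd hu' (hnoL i x')
              · have := hnProw i (hP0 i) y y' hu hu'
                simp [this]
          have hle := Set.ncard_le_ncard_of_injOn _ (fun a _ => Set.mem_univ _) hinj
            (Set.finite_univ (α := Fin l))
          rw [Set.ncard_univ, Nat.card_eq_fintype_card, Fintype.card_fin] at hle
          omega
        · push_neg at hP1 hP0
          obtain ⟨i₀, hi₀⟩ := hP1
          obtain ⟨j₀, hj₀⟩ := hP0
          obtain ⟨z₀, hz₀⟩ := hB i₀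
          set D₁ : Set (Fin l × (Fin m ⊕ Fin n)) := {v ∈ D | v.1 ∈ P} with hD1
          set D₂ : Set (Fin l × (Fin m ⊕ Fin n)) := {v ∈ D | v.1 ∉ P} with hD2
          have hDsplit : D = D₁ ∪ D₂ := by
            ext v; by_cases hv : v.1 ∈ P <;> simp [hD1, hD2, hv]
          have hcard : D.ncard ≤ D₁.ncard + D₂.ncard := by
            rw [hDsplit]; exact Set.ncard_union_le _ _
          -- D₁ injects into right columns other than z₀
          have h1 : D₁.ncard ≤ n - 1 := by
            have hinj : Set.InjOn Prod.snd D₁ := by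
              rintro ⟨i, c⟩ ⟨hu, hP⟩ ⟨i', c'⟩ ⟨hu', hP'⟩ he
              simp only at he
              subst he
              rcases c with x | y
              · exact absurd hu (hnoL i x)
              · have := hProw i' hP' y hu' i hu
                simp [this]
            have hmem : ∀ v ∈ D₁, Prod.snd v ∈ (Sum.inr '' ({z₀}ᶜ) : Set (Fin m ⊕ Fin n)) := by
              rintro ⟨i, c⟩ ⟨hu, hP⟩
              rcases c with x | y
              · exact absurd hu (hnoL i x)
              · refine ⟨y, ?_, rfl⟩
                simp only [Set.mem_compl_iff, Set.mem_singleton_iff]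
                intro hyz
                subst hyz
                have : i₀ = i := by
                  have := hProw i hP y hu i₀ hz₀; exact this.symm ▸ rfl
                exact hi₀ (this ▸ hP)
            have hle := Set.ncard_le_ncard_of_injOn _ hmem hinj (Set.toFinite _)
            rw [Set.ncard_image_of_injective _ Sum.inr_injective,
              ncard_compl_singleton', Nat.card_eq_fintype_card, Fintype.card_fin] at hle
            exact hle
          have h2 : D₂.ncard ≤ l - 1 := by
            have hinj : Set.InjOn Prod.fst D₂ := by
              rintro ⟨i, c⟩ ⟨hu, hP⟩ ⟨i', c'⟩ ⟨hu', hP'⟩ he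
              simp only at he
              subst he
              rcases c with x | y
              · exact absurd hu (hnoL i x)
              · rcases c' with x' | y'
                · exact absurd hu' (hnoL i x')
                · have := hnProw i hP y y' hu hu'
                  simp [this]
            have hmem : ∀ v ∈ D₂, Prod.fst v ∈ ({j₀}ᶜ : Set (Fin l)) := by
              rintro ⟨i, c⟩ ⟨hu, hP⟩
              simp only [Set.mem_compl_iff, Set.mem_singleton_iff]
              intro hij
              exact hP (hij ▸ hj₀)
            have hle := Set.ncard_le_ncard_of_injOn _ hmem hinj (Set.toFinite _)
            rw [ncard_compl_singleton', Nat.card_eq_fintype_card, Fintype.card_fin] at hle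
            exact hle
          omega
  · push_neg at hEL
    by_cases hER : ∃ y : Fin n, ∀ k, (k, Sum.inr y) ∉ D
    · -- Case 2: empty right column, no empty left column (mirror of case 3)
      have hA : ∀ i, ∃ x, (i, Sum.inl x) ∈ D := L2 h.1 hER.choose_spec
      have hnoR : ∀ i y, (i, Sum.inr y) ∉ D := by
        intro i y hy
        rcases L1r h hy with ⟨_, j, hj⟩ | ⟨_, x, hx⟩
        · obtain ⟨x, hx⟩ := hA j; exact hj x hx
        · obtain ⟨k, hk⟩ := hEL x; exact hx k hk
      have key : ∀ i x, (i, Sum.inl x) ∈ D →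
          (∀ k, (k, Sum.inl x) ∈ D → k = i) ∨ (∀ x', (i, Sum.inl x') ∈ D → x' = x) := by
        intro i x hx
        rcases L1 h hx with ⟨hs, _⟩ | ⟨hs, y, hy⟩
        · exact Or.inl hs
        · exact Or.inr hs
      set P : Set (Fin l) := {i | ∃ x x', x ≠ x' ∧ (i, Sum.inl x) ∈ D ∧ (i, Sum.inl x') ∈ D}
        with hPdef
      have hProw : ∀ i ∈ P, ∀ x, (i, Sum.inl x) ∈ D → ∀ k, (k, Sum.inl x) ∈ D → k = i := by
        intro i hi x hx
        rcases key i x hx with hc | hr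
        · exact hc
        · obtain ⟨x₁, x₂, hne, h1, h2⟩ := hi
          exact absurd ((hr x₁ h1).trans (hr x₂ h2).symm) hne
      have hnProw : ∀ i ∉ P, ∀ x x', (i, Sum.inl x) ∈ D → (i, Sum.inl x') ∈ D → x = x' := by
        intro i hi x x' hx hx'
        by_contra hne
        exact hi ⟨x, x', hne, hx, hx'⟩
      by_cases hP1 : ∀ i, i ∈ P
      · have hinj : Set.InjOn Prod.snd D := by
          rintro ⟨i, c⟩ hu ⟨i', c'⟩ hu' he
          simp only at he
          subst he
          rcases c with x | y
          · have := hProw i' (hP1 i') x hu' i hu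
            simp [this]
          · exact absurd hu (hnoR i y)
        have hle := Set.ncard_le_ncard_of_injOn _ (fun a _ => Set.mem_univ _) hinj
          (Set.finite_univ (α := Fin m ⊕ Fin n))
        rw [Set.ncard_univ, hmn] at hle
        omega
      · by_cases hP0 : ∀ i, i ∉ P
        · have hinj : Set.InjOn Prod.fst D := by
            rintro ⟨i, c⟩ hu ⟨i', c'⟩ hu' he
            simp only at he
            subst he
            rcases c with x | y
            · rcases c' with x' | y'
              · have := hnProw i (hP0 i) x x' hu hu'
                simp [this]
              · exact absurd hu' (hnoR i y')
            · exact absurd hu (hnoR i y)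
          have hle := Set.ncard_le_ncard_of_injOn _ (fun a _ => Set.mem_univ _) hinj
            (Set.finite_univ (α := Fin l))
          rw [Set.ncard_univ, Nat.card_eq_fintype_card, Fintype.card_fin] at hle
          omega
        · push_neg at hP1 hP0
          obtain ⟨i₀, hi₀⟩ := hP1
          obtain ⟨j₀, hj₀⟩ := hP0
          obtain ⟨z₀, hz₀⟩ := hA i₀
          set D₁ : Set (Fin l × (Fin m ⊕ Fin n)) := {v ∈ D | v.1 ∈ P} with hD1
          set D₂ : Set (Fin l × (Fin m ⊕ Fin n)) := {v ∈ D | v.1 ∉ P} with hD2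
          have hDsplit : D = D₁ ∪ D₂ := by
            ext v; by_cases hv : v.1 ∈ P <;> simp [hD1, hD2, hv]
          have hcard : D.ncard ≤ D₁.ncard + D₂.ncard := by
            rw [hDsplit]; exact Set.ncard_union_le _ _
          have h1 : D₁.ncard ≤ m - 1 := by
            have hinj : Set.InjOn Prod.snd D₁ := by
              rintro ⟨i, c⟩ ⟨hu, hP⟩ ⟨i', c'⟩ ⟨hu', hP'⟩ he
              simp only at he
              subst he
              rcases c with x | y
              · have := hProw i' hP' x hu' i hu
                simp [this]
              · exact absurd hu (hnoR i y)
            have hmem : ∀ v ∈ D₁, Prod.snd v ∈ (Sum.inl '' ({z₀}ᶜ) : Set (Fin m ⊕ Fin n)) := by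
              rintro ⟨i, c⟩ ⟨hu, hP⟩
              rcases c with x | y
              · refine ⟨x, ?_, rfl⟩
                simp only [Set.mem_compl_iff, Set.mem_singleton_iff]
                intro hxz
                subst hxz
                have : i₀ = i := by
                  have := hProw i hP x hu i₀ hz₀; exact this.symm ▸ rfl
                exact hi₀ (this ▸ hP)
              · exact absurd hu (hnoR i y)
            have hle := Set.ncard_le_ncard_of_injOn _ hmem hinj (Set.toFinite _)
            rw [Set.ncard_image_of_injective _ Sum.inl_injective,
              ncard_compl_singleton', Nat.card_eq_fintype_card, Fintype.card_fin] at hle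
            exact hle
          have h2 : D₂.ncard ≤ l - 1 := by
            have hinj : Set.InjOn Prod.fst D₂ := by
              rintro ⟨i, c⟩ ⟨hu, hP⟩ ⟨i', c'⟩ ⟨hu', hP'⟩ he
              simp only at he
              subst he
              rcases c with x | y
              · rcases c' with x' | y'
                · have := hnProw i hP x x' hu hu'
                  simp [this]
                · exact absurd hu' (hnoR i y')
              · exact absurd hu (hnoR i y)
            have hmem : ∀ v ∈ D₂, Prod.fst v ∈ ({j₀}ᶜ : Set (Fin l)) := by
              rintro ⟨i, c⟩ ⟨hu, hP⟩
              simp only [Set.mem_compl_iff, Set.mem_singleton_iff]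
              intro hij
              exact hP (hij ▸ hj₀)
            have hle := Set.ncard_le_ncard_of_injOn _ hmem hinj (Set.toFinite _)
            rw [ncard_compl_singleton', Nat.card_eq_fintype_card, Fintype.card_fin] at hle
            exact hle
          omega
    · -- Case 1: no empty columns at all
      push_neg at hER
      have keyL : ∀ i x, (i, Sum.inl x) ∈ D → ∀ k, (k, Sum.inl x) ∈ D → k = i := by
        intro i x hx
        rcases L1 h hx with ⟨hs, _⟩ | ⟨_, y, hy⟩
        · exact hs
        · obtain ⟨k, hk⟩ := hER y; exact absurd hk (hy k)
      have keyR : ∀ i y, (i, Sum.inr y) ∈ D → ∀ k, (k, Sum.inr y) ∈ D → k = i := by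
        intro i y hy
        rcases L1r h hy with ⟨hs, _⟩ | ⟨_, x, hx⟩
        · exact hs
        · obtain ⟨k, hk⟩ := hEL x; exact absurd hk (hx k)
      have hinj : Set.InjOn Prod.snd D := by
        rintro ⟨i, c⟩ hu ⟨i', c'⟩ hu' he
        simp only at he
        subst he
        rcases c with x | y
        · have := keyL i' x hu' i hu
          simp [this]
        · have := keyR i' y hu' i hu
          simp [this]
      have hle := Set.ncard_le_ncard_of_injOn _ (fun a _ => Set.mem_univ _) hinj
        (Set.finite_univ (α := Fin m ⊕ Fin n))
      rw [Set.ncard_univ, hmn] at hle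
      omega

end UB
section CON
variable {l m n : ℕ}

lemma constr1 (hl : 2 ≤ l) :
    ∃ D : Set (Fin l × (Fin m ⊕ Fin n)), IsMinDomSet (GG l m n) D ∧ D.ncard = m + n := by
  set i0 : Fin l := ⟨0, by omega⟩ with hi0
  set i1 : Fin l := ⟨1, by omega⟩ with hi1
  have h01 : i0 ≠ i1 := by simp [hi0, hi1, Fin.ext_iff]
  refine ⟨{v | v.1 = i0}, ⟨?_, ?_⟩, ?_⟩
  · rintro ⟨a, c⟩ hv
    simp only [Set.mem_setOf_eq] at hv
    exact ⟨(i0, c), rfl, by simp [boxProd_adj, Ne.symm hv]⟩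
  · refine (isMinDomSet_of_private ?_ ?_).2
    · rintro ⟨a, c⟩ hv
      simp only [Set.mem_setOf_eq] at hv
      exact ⟨(i0, c), rfl, by simp [boxProd_adj, Ne.symm hv]⟩
    · rintro ⟨a, c⟩ hv
      simp only [Set.mem_setOf_eq] at hv
      subst hv
      refine ⟨(i1, c), ?_, ?_⟩
      · rintro ⟨hmem, -⟩
        exact h01 hmem.symm
      · rintro ⟨b, c'⟩ ⟨hb, hne⟩ hadj
        simp only [Set.mem_setOf_eq] at hb
        subst hb
        rw [boxProd_adj] at hadj
        rcases hadj with ⟨h1, h2⟩ | ⟨h1, h2⟩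
        · simp only at h2
          subst h2
          exact hne rfl
        · simp only at h2
          exact h01 h2
  · have himg : {v : Fin l × (Fin m ⊕ Fin n) | v.1 = i0} = Prod.mk i0 '' Set.univ := by
      ext ⟨a, c⟩
      simp [eq_comm]
    rw [himg, Set.ncard_image_of_injective _ (fun c c' hcc => by
      simpa using congrArg Prod.snd hcc), Set.ncard_univ]
    simp [Nat.card_eq_fintype_card]

lemma constr2 (hm : 2 ≤ m) (hn : 2 ≤ n) :
    ∃ D : Set (Fin l × (Fin m ⊕ Fin n)), IsMinDomSet (GG l m n) D ∧ D.ncard = 2 * l := by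
  set x0 : Fin m := ⟨0, by omega⟩ with hx0
  set x1 : Fin m := ⟨1, by omega⟩ with hx1
  set y0 : Fin n := ⟨0, by omega⟩ with hy0
  set y1 : Fin n := ⟨1, by omega⟩ with hy1
  have hx01 : x0 ≠ x1 := by simp [hx0, hx1, Fin.ext_iff]
  have hy01 : y0 ≠ y1 := by simp [hy0, hy1, Fin.ext_iff]
  set D : Set (Fin l × (Fin m ⊕ Fin n)) := {v | v.2 = Sum.inl x0 ∨ v.2 = Sum.inr y0} with hD
  have hdom : IsDomSet (GG l m n) D := by
    rintro ⟨a, c⟩ hv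
    rcases c with x | y
    · exact ⟨(a, Sum.inr y0), Or.inr rfl, by simp [boxProd_adj]⟩
    · exact ⟨(a, Sum.inl x0), Or.inl rfl, by simp [boxProd_adj]⟩
  refine ⟨D, ⟨hdom, ?_⟩, ?_⟩
  · refine (isMinDomSet_of_private hdom ?_).2
    rintro ⟨a, c⟩ hv
    rcases hv with hc | hc <;> simp only at hc <;> subst hc
    · refine ⟨(a, Sum.inr y1), ?_, ?_⟩
      · rintro ⟨hb, -⟩
        rcases hb with hb | hb
        · simp at hb
        · simp only [Sum.inr.injEq] at hb
          exact hy01 hb.symm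
      · rintro ⟨b, c'⟩ ⟨hb, hne⟩ hadj
        rw [boxProd_adj] at hadj
        rcases hadj with ⟨h1, h2⟩ | ⟨h1, h2⟩
        · simp only at h2
          subst h2
          rcases hb with hb | hb
          · simp at hb
          · simp only [Sum.inr.injEq] at hb
            exact hy01 hb.symm
        · simp only at h2
          subst h2
          rcases hb with hb | hb <;> simp only at hb <;> subst hb
          · exact hne rfl
          · simp at h1
    · refine ⟨(a, Sum.inl x1), ?_, ?_⟩
      · rintro ⟨hb, -⟩
        rcases hb with hb | hb
        · simp only [Sum.inl.injEq] at hb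
          exact hx01 hb.symm
        · simp at hb
      · rintro ⟨b, c'⟩ ⟨hb, hne⟩ hadj
        rw [boxProd_adj] at hadj
        rcases hadj with ⟨h1, h2⟩ | ⟨h1, h2⟩
        · simp only at h2
          subst h2
          rcases hb with hb | hb
          · simp only [Sum.inl.injEq] at hb
            exact hx01 hb.symm
          · simp at hb
        · simp only at h2
          subst h2
          rcases hb with hb | hb <;> simp only at hb <;> subst hb
          · simp at h1
          · exact hne rfl
  · have himg : D = (fun p : Fin l × Bool =>
        (p.1, if p.2 then Sum.inl x0 else (Sum.inr y0 : Fin m ⊕ Fin n))) '' Set.univ := by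
      ext ⟨a, c⟩
      simp only [hD, Set.mem_setOf_eq, Set.image_univ, Set.mem_range]
      constructor
      · rintro (hc | hc) <;> subst hc
        · exact ⟨(a, true), rfl⟩
        · exact ⟨(a, false), rfl⟩
      · rintro ⟨⟨b, t⟩, ht⟩
        rcases t <;> simp only [Prod.mk.injEq] at ht <;> obtain ⟨rfl, rfl⟩ := ht
        · exact Or.inr rfl
        · exact Or.inl rfl
    have hinj : Function.Injective (fun p : Fin l × Bool =>
        (p.1, if p.2 then Sum.inl x0 else (Sum.inr y0 : Fin m ⊕ Fin n))) := by
      rintro ⟨a, s⟩ ⟨b, t⟩ h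
      simp only [Prod.mk.injEq] at h
      obtain ⟨rfl, h2⟩ := h
      rcases s <;> rcases t <;> simp_all
    rw [himg, Set.ncard_image_of_injective _ hinj, Set.ncard_univ]
    simp only [Nat.card_eq_fintype_card, Fintype.card_prod, Fintype.card_fin, Fintype.card_bool]
    ring

lemma constr3 (hl : 2 ≤ l) (hm : 2 ≤ m) (hn : 2 ≤ n) :
    ∃ D : Set (Fin l × (Fin m ⊕ Fin n)), IsMinDomSet (GG l m n) D ∧ D.ncard = m + l - 2 := by
  set i0 : Fin l := ⟨0, by omega⟩ with hi0
  set i1 : Fin l := ⟨1, by omega⟩ with hi1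
  set x0 : Fin m := ⟨0, by omega⟩ with hx0
  set x1 : Fin m := ⟨1, by omega⟩ with hx1
  set y0 : Fin n := ⟨0, by omega⟩ with hy0
  have h01 : i0 ≠ i1 := by simp [hi0, hi1, Fin.ext_iff]
  have hx01 : x0 ≠ x1 := by simp [hx0, hx1, Fin.ext_iff]
  set D : Set (Fin l × (Fin m ⊕ Fin n)) :=
    {v | (v.1 = i0 ∧ ∃ x, x ≠ x0 ∧ v.2 = Sum.inl x) ∨ (v.1 ≠ i0 ∧ v.2 = Sum.inl x0)} with hD
  have hdom : IsDomSet (GG l m n) D := by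
    rintro ⟨a, c⟩ hv
    simp only [hD, Set.mem_setOf_eq, not_or, not_and] at hv
    obtain ⟨hv1, hv2⟩ := hv
    rcases c with x | y
    · by_cases ha : a = i0
      · subst ha
        by_cases hax : x = x0
        · subst hax
          refine ⟨(i1, Sum.inl x0), Or.inr ⟨Ne.symm h01, rfl⟩, ?_⟩
          simp [boxProd_adj, Ne.symm h01]
        · exact absurd ⟨x, hax, rfl⟩ (hv1 rfl)
      · by_cases hax : x = x0
        · subst hax
          exact absurd rfl (hv2 ha)
        · refine ⟨(i0, Sum.inl x), Or.inl ⟨rfl, x, hax, rfl⟩, ?_⟩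
          rw [boxProd_adj]
          exact Or.inl ⟨(top_adj i0 a).mpr (Ne.symm ha), rfl⟩
    · by_cases ha : a = i0
      · subst ha
        exact ⟨(i0, Sum.inl x1), Or.inl ⟨rfl, x1, Ne.symm hx01, rfl⟩, by simp [boxProd_adj]⟩
      · exact ⟨(a, Sum.inl x0), Or.inr ⟨ha, rfl⟩, by simp [boxProd_adj]⟩
  refine ⟨D, ⟨hdom, ?_⟩, ?_⟩
  · refine (isMinDomSet_of_private hdom ?_).2
    rintro ⟨a, c⟩ hv
    rcases hv with ⟨ha, x, hx, hc⟩ | ⟨ha, hc⟩ <;> simp only at ha hc <;> subst hc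
    · subst ha
      refine ⟨(i1, Sum.inl x), ?_, ?_⟩
      · rintro ⟨hb, -⟩
        rcases hb with ⟨hb1, -⟩ | ⟨-, hb2⟩
        · exact h01 hb1.symm
        · simp only [Sum.inl.injEq] at hb2
          exact hx hb2
      · rintro ⟨b, c'⟩ ⟨hb, hne⟩ hadj
        rw [boxProd_adj] at hadj
        rcases hadj with ⟨h1, h2⟩ | ⟨h1, h2⟩
        · simp only at h2
          subst h2
          rcases hb with ⟨hb1, x', hx', hb2⟩ | ⟨hb1, hb2⟩
          · simp only at hb1
            subst hb1
            exact hne rfl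
          · simp only [Sum.inl.injEq] at hb2
            exact hx hb2
        · simp only at h2
          subst h2
          rcases hb with ⟨-, x', -, hb2⟩ | ⟨-, hb2⟩ <;> subst hb2 <;> simp at h1
    · refine ⟨(a, Sum.inr y0), ?_, ?_⟩
      · rintro ⟨hb, -⟩
        rcases hb with ⟨-, x', -, hb2⟩ | ⟨-, hb2⟩ <;> simp at hb2
      · rintro ⟨b, c'⟩ ⟨hb, hne⟩ hadj
        rw [boxProd_adj] at hadj
        rcases hadj with ⟨h1, h2⟩ | ⟨h1, h2⟩
        · simp only at h2
          subst h2
          rcases hb with ⟨-, x', -, hb2⟩ | ⟨-, hb2⟩ <;> simp at hb2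
        · simp only at h2
          subst h2
          rcases hb with ⟨hb1, x', hx', hb2⟩ | ⟨hb1, hb2⟩
          · exact ha hb1
          · subst hb2
            exact hne rfl
  · have hsplit : D =
        (fun x : Fin m => ((i0, Sum.inl x) : Fin l × (Fin m ⊕ Fin n))) '' {x | x ≠ x0}
        ∪ (fun i : Fin l => ((i, Sum.inl x0) : Fin l × (Fin m ⊕ Fin n))) '' {i | i ≠ i0} := by
      ext ⟨a, c⟩
      simp only [hD, Set.mem_setOf_eq, Set.mem_union, Set.mem_image]
      constructor
      · rintro (⟨ha, x, hx, hc⟩ | ⟨ha, hc⟩)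
        · exact Or.inl ⟨x, hx, by rw [ha, hc]⟩
        · exact Or.inr ⟨a, ha, by rw [hc]⟩
      · rintro (⟨x, hx, hc⟩ | ⟨i, hi, hc⟩)
        · simp only [Prod.mk.injEq] at hc
          exact Or.inl ⟨hc.1.symm, x, hx, hc.2.symm⟩
        · simp only [Prod.mk.injEq] at hc
          exact Or.inr ⟨hc.1 ▸ hi, hc.2.symm⟩
    rw [hsplit, Set.ncard_union_eq]
    · have e1 : ((fun x : Fin m => ((i0, Sum.inl x) : Fin l × (Fin m ⊕ Fin n))) ''
          {x | x ≠ x0}).ncard = m - 1 := by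
        rw [Set.ncard_image_of_injective _ (fun a b hab => by simpa using hab)]
        have hcx : {x : Fin m | x ≠ x0} = ({x0}ᶜ : Set (Fin m)) := by ext; simp
        rw [hcx, ncard_compl_singleton', Nat.card_eq_fintype_card, Fintype.card_fin]
      have e2 : ((fun i : Fin l => ((i, Sum.inl x0) : Fin l × (Fin m ⊕ Fin n))) ''
          {i | i ≠ i0}).ncard = l - 1 := by
        rw [Set.ncard_image_of_injective _ (fun a b hab => by simpa using hab)]
        have hci : {i : Fin l | i ≠ i0} = ({i0}ᶜ : Set (Fin l)) := by ext; simp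
        rw [hci, ncard_compl_singleton', Nat.card_eq_fintype_card, Fintype.card_fin]
      rw [e1, e2]
      omega
    · rw [Set.disjoint_left]
      rintro ⟨a, c⟩ ⟨x, hx, hc⟩ ⟨i, hi, hc'⟩
      simp only [Prod.mk.injEq] at hc hc'
      exact hi (hc'.1.trans hc.1.symm)
end CON
section FIN
variable {l m n : ℕ}

lemma constr4 (hl : 2 ≤ l) (hm : 2 ≤ m) (hn : 2 ≤ n) :
    ∃ D : Set (Fin l × (Fin m ⊕ Fin n)), IsMinDomSet (GG l m n) D ∧ D.ncard = n + l - 2 := by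
  set i0 : Fin l := ⟨0, by omega⟩ with hi0
  set i1 : Fin l := ⟨1, by omega⟩ with hi1
  set y0 : Fin n := ⟨0, by omega⟩ with hy0
  set y1 : Fin n := ⟨1, by omega⟩ with hy1
  set x0 : Fin m := ⟨0, by omega⟩ with hx0
  have h01 : i0 ≠ i1 := by simp [hi0, hi1, Fin.ext_iff]
  have hy01 : y0 ≠ y1 := by simp [hy0, hy1, Fin.ext_iff]
  set D : Set (Fin l × (Fin m ⊕ Fin n)) :=
    {v | (v.1 = i0 ∧ ∃ y, y ≠ y0 ∧ v.2 = Sum.inr y) ∨ (v.1 ≠ i0 ∧ v.2 = Sum.inr y0)} with hD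
  have hdom : IsDomSet (GG l m n) D := by
    rintro ⟨a, c⟩ hv
    simp only [hD, Set.mem_setOf_eq, not_or, not_and] at hv
    obtain ⟨hv1, hv2⟩ := hv
    rcases c with x | y
    · by_cases ha : a = i0
      · subst ha
        exact ⟨(i0, Sum.inr y1), Or.inl ⟨rfl, y1, Ne.symm hy01, rfl⟩, by simp [boxProd_adj]⟩
      · exact ⟨(a, Sum.inr y0), Or.inr ⟨ha, rfl⟩, by simp [boxProd_adj]⟩
    · by_cases ha : a = i0
      · subst ha
        by_cases hay : y = y0
        · subst hay
          refine ⟨(i1, Sum.inr y0), Or.inr ⟨Ne.symm h01, rfl⟩, ?_⟩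
          rw [boxProd_adj]
          exact Or.inl ⟨(top_adj i1 i0).mpr (Ne.symm h01), rfl⟩
        · exact absurd ⟨y, hay, rfl⟩ (hv1 rfl)
      · by_cases hay : y = y0
        · subst hay
          exact absurd rfl (hv2 ha)
        · refine ⟨(i0, Sum.inr y), Or.inl ⟨rfl, y, hay, rfl⟩, ?_⟩
          rw [boxProd_adj]
          exact Or.inl ⟨(top_adj i0 a).mpr (Ne.symm ha), rfl⟩
  refine ⟨D, ⟨hdom, ?_⟩, ?_⟩
  · refine (isMinDomSet_of_private hdom ?_).2
    rintro ⟨a, c⟩ hv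
    rcases hv with ⟨ha, y, hy, hc⟩ | ⟨ha, hc⟩ <;> simp only at ha hc <;> subst hc
    · subst ha
      refine ⟨(i1, Sum.inr y), ?_, ?_⟩
      · rintro ⟨hb, -⟩
        rcases hb with ⟨hb1, -⟩ | ⟨-, hb2⟩
        · exact h01 hb1.symm
        · simp only [Sum.inr.injEq] at hb2
          exact hy hb2
      · rintro ⟨b, c'⟩ ⟨hb, hne⟩ hadj
        rw [boxProd_adj] at hadj
        rcases hadj with ⟨h1, h2⟩ | ⟨h1, h2⟩
        · simp only at h2
          subst h2
          rcases hb with ⟨hb1, y', hy', hb2⟩ | ⟨hb1, hb2⟩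
          · simp only at hb1
            subst hb1
            exact hne rfl
          · simp only [Sum.inr.injEq] at hb2
            exact hy hb2
        · simp only at h2
          subst h2
          rcases hb with ⟨-, y', -, hb2⟩ | ⟨-, hb2⟩ <;> subst hb2 <;> simp at h1
    · refine ⟨(a, Sum.inl x0), ?_, ?_⟩
      · rintro ⟨hb, -⟩
        rcases hb with ⟨-, y', -, hb2⟩ | ⟨-, hb2⟩ <;> simp at hb2
      · rintro ⟨b, c'⟩ ⟨hb, hne⟩ hadj
        rw [boxProd_adj] at hadj
        rcases hadj with ⟨h1, h2⟩ | ⟨h1, h2⟩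
        · simp only at h2
          subst h2
          rcases hb with ⟨-, y', -, hb2⟩ | ⟨-, hb2⟩ <;> simp at hb2
        · simp only at h2
          subst h2
          rcases hb with ⟨hb1, y', hy', hb2⟩ | ⟨hb1, hb2⟩
          · exact ha hb1
          · subst hb2
            exact hne rfl
  · have hsplit : D =
        (fun y : Fin n => ((i0, Sum.inr y) : Fin l × (Fin m ⊕ Fin n))) '' {y | y ≠ y0}
        ∪ (fun i : Fin l => ((i, Sum.inr y0) : Fin l × (Fin m ⊕ Fin n))) '' {i | i ≠ i0} := by
      ext ⟨a, c⟩
      simp only [hD, Set.mem_setOf_eq, Set.mem_union, Set.mem_image]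
      constructor
      · rintro (⟨ha, y, hy, hc⟩ | ⟨ha, hc⟩)
        · exact Or.inl ⟨y, hy, by rw [ha, hc]⟩
        · exact Or.inr ⟨a, ha, by rw [hc]⟩
      · rintro (⟨y, hy, hc⟩ | ⟨i, hi, hc⟩)
        · simp only [Prod.mk.injEq] at hc
          exact Or.inl ⟨hc.1.symm, y, hy, hc.2.symm⟩
        · simp only [Prod.mk.injEq] at hc
          exact Or.inr ⟨hc.1 ▸ hi, hc.2.symm⟩
    rw [hsplit, Set.ncard_union_eq]
    · have e1 : ((fun y : Fin n => ((i0, Sum.inr y) : Fin l × (Fin m ⊕ Fin n))) ''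
          {y | y ≠ y0}).ncard = n - 1 := by
        rw [Set.ncard_image_of_injective _ (fun a b hab => by simpa using hab)]
        have hcy : {y : Fin n | y ≠ y0} = ({y0}ᶜ : Set (Fin n)) := by ext; simp
        rw [hcy, ncard_compl_singleton', Nat.card_eq_fintype_card, Fintype.card_fin]
      have e2 : ((fun i : Fin l => ((i, Sum.inr y0) : Fin l × (Fin m ⊕ Fin n))) ''
          {i | i ≠ i0}).ncard = l - 1 := by
        rw [Set.ncard_image_of_injective _ (fun a b hab => by simpa using hab)]
        have hci : {i : Fin l | i ≠ i0} = ({i0}ᶜ : Set (Fin l)) := by ext; simp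
        rw [hci, ncard_compl_singleton', Nat.card_eq_fintype_card, Fintype.card_fin]
      rw [e1, e2]
      omega
    · rw [Set.disjoint_left]
      rintro ⟨a, c⟩ ⟨y, hy, hc⟩ ⟨i, hi, hc'⟩
      simp only [Prod.mk.injEq] at hc hc'
      exact hi (hc'.1.trans hc.1.symm)
end FIN

theorem stmt_5 (l m n : ℕ) (hl : 2 ≤ l) (hm : 2 ≤ m) (hn : 2 ≤ n) :
    upperDom ((⊤ : SimpleGraph (Fin l)).boxProd (completeBipartiteGraph (Fin m) (Fin n))) =
      max (m + n) (max (2 * l) (max (m + l - 2) (n + l - 2))) := by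
  set M := max (m + n) (max (2 * l) (max (m + l - 2) (n + l - 2))) with hM
  set S := {k | ∃ D : Set (Fin l × (Fin m ⊕ Fin n)), IsMinDomSet (GG l m n) D ∧ D.ncard = k}
    with hS
  have hub : ∀ k ∈ S, k ≤ M := by
    rintro k ⟨D, hD, rfl⟩
    exact upper_bound hl hm hn hD
  have hmem : M ∈ S := by
    have hcases : M = m + n ∨ M = 2 * l ∨ M = m + l - 2 ∨ M = n + l - 2 := by omega
    rcases hcases with hc | hc | hc | hc <;> rw [hc]
    · obtain ⟨D, h1, h2⟩ := constr1 (l := l) (m := m) (n := n) hl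
      exact ⟨D, h1, h2⟩
    · obtain ⟨D, h1, h2⟩ := constr2 (l := l) hm hn
      exact ⟨D, h1, h2⟩
    · obtain ⟨D, h1, h2⟩ := constr3 hl hm hn
      exact ⟨D, h1, h2⟩
    · obtain ⟨D, h1, h2⟩ := constr4 hl hm hn
      exact ⟨D, h1, h2⟩
  have : upperDom (GG l m n) = M := by
    apply le_antisymm
    · exact csSup_le ⟨M, hmem⟩ hub
    · exact le_csSup ⟨M, hub⟩ hmem
  exact this
end

section
/- The upper domination number of X_n is 2, where X_n is the graph on vertices {u_0,...,u_n} ∪ {v_0,...,v_n} with edges u_iu_j (i ≠ j), v_iv_j (i ≠ j), and u_iv_i for i ≠ 0. -/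
open SimpleGraph

variable {V : Type*} {W : Type*}

/-!
Both cells of `X_n` are cliques, so a vertex in each cell already dominates the whole graph;
by minimality, a minimal dominating set meeting both cells is exactly such a pair. Since `u₀`
and `v₀` have no neighbours outside their own cells, every dominating set meets both cells,
and this also shows that `{u₀, v₀}` is minimal.
-/

open Set

section Domination

variable {G : SimpleGraph V} {A B D S : Set V}

theorem IsMinDomSet.eq_of_subset (hD : IsMinDomSet G D) (hS : IsDomSet G S) (hSD : S ⊆ D) :
    S = D := by
  by_contra hne
  exact hD.2 S (hSD.ssubset_of_ne hne) hS

theorem IsDomSet.inter_nonempty (hD : IsDomSet G D) {v : V} (hv : v ∈ A)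
    (hN : G.neighborSet v ⊆ A) : (D ∩ A).Nonempty := by
  by_cases hvD : v ∈ D
  · exact ⟨v, hvD, hv⟩
  · obtain ⟨u, huD, huv⟩ := hD v hvD
    exact ⟨u, huD, hN huv.symm⟩

theorem isDomSet_pair_of_isClique (hA : G.IsClique A) (hB : G.IsClique B) (hAB : A ∪ B = univ)
    {a c : V} (ha : a ∈ A) (hc : c ∈ B) : IsDomSet G {a, c} := by
  intro v hv
  simp only [mem_insert_iff, mem_singleton_iff, not_or] at hv
  rcases (hAB ▸ mem_univ v : v ∈ A ∪ B) with hvA | hvB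
  · exact ⟨a, by simp, hA ha hvA (Ne.symm hv.1)⟩
  · exact ⟨c, by simp, hB hc hvB (Ne.symm hv.2)⟩

theorem IsMinDomSet.ncard_le_two_of_isClique (hD : IsMinDomSet G D) (hA : G.IsClique A)
    (hB : G.IsClique B) (hAB : A ∪ B = univ) (hDA : (D ∩ A).Nonempty)
    (hDB : (D ∩ B).Nonempty) : D.ncard ≤ 2 := by
  obtain ⟨a, haD, ha⟩ := hDA
  obtain ⟨c, hcD, hc⟩ := hDB
  have hpair : ({a, c} : Set V) = D :=
    hD.eq_of_subset (isDomSet_pair_of_isClique hA hB hAB ha hc) (insert_subset haD (by simpa))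
  rw [← hpair]
  exact (ncard_insert_le a {c}).trans (by simp)

end Domination

namespace Xgraph

variable {n : ℕ}

@[simp]
theorem adj_inl_inl (i j : Fin (n + 1)) : (Xgraph n).Adj (.inl i) (.inl j) ↔ i ≠ j := by
  simp [Xgraph]

@[simp]
theorem adj_inr_inr (i j : Fin (n + 1)) : (Xgraph n).Adj (.inr i) (.inr j) ↔ i ≠ j := by
  simp [Xgraph]

@[simp]
theorem adj_inl_inr (i j : Fin (n + 1)) : (Xgraph n).Adj (.inl i) (.inr j) ↔ i = j ∧ i ≠ 0 := by
  simp [Xgraph]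

@[simp]
theorem adj_inr_inl (i j : Fin (n + 1)) : (Xgraph n).Adj (.inr j) (.inl i) ↔ i = j ∧ i ≠ 0 := by
  rw [adj_comm, adj_inl_inr]

theorem isClique_range_inl : (Xgraph n).IsClique (range Sum.inl) := by
  rintro _ ⟨i, rfl⟩ _ ⟨j, rfl⟩ hne
  simpa using hne

theorem isClique_range_inr : (Xgraph n).IsClique (range Sum.inr) := by
  rintro _ ⟨i, rfl⟩ _ ⟨j, rfl⟩ hne
  simpa using hne

theorem inter_range_inl_nonempty_of_isDomSet {D : Set (Fin (n + 1) ⊕ Fin (n + 1))}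
    (hD : IsDomSet (Xgraph n) D) : (D ∩ range Sum.inl).Nonempty := by
  refine hD.inter_nonempty (v := .inl 0) ⟨0, rfl⟩ ?_
  rintro (i | j) h
  · exact ⟨i, rfl⟩
  · simp at h

theorem inter_range_inr_nonempty_of_isDomSet {D : Set (Fin (n + 1) ⊕ Fin (n + 1))}
    (hD : IsDomSet (Xgraph n) D) : (D ∩ range Sum.inr).Nonempty := by
  refine hD.inter_nonempty (v := .inr 0) ⟨0, rfl⟩ ?_
  rintro (i | j) h
  · simp at h
  · exact ⟨j, rfl⟩

theorem isMinDomSet_inl_zero_inr_zero :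
    IsMinDomSet (Xgraph n) {.inl 0, .inr 0} := by
  refine ⟨isDomSet_pair_of_isClique isClique_range_inl isClique_range_inr
    range_inl_union_range_inr ⟨0, rfl⟩ ⟨0, rfl⟩, fun D hD hdom => ?_⟩
  obtain ⟨x, hxD, i, rfl⟩ := inter_range_inl_nonempty_of_isDomSet hdom
  obtain ⟨y, hyD, j, rfl⟩ := inter_range_inr_nonempty_of_isDomSet hdom
  have hi : i = 0 := by simpa using hD.1 hxD
  have hj : j = 0 := by simpa using hD.1 hyD
  subst hi hj
  exact hD.2 (insert_subset hxD (singleton_subset_iff.2 hyD))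

theorem ncard_le_two_of_isMinDomSet {D : Set (Fin (n + 1) ⊕ Fin (n + 1))}
    (hD : IsMinDomSet (Xgraph n) D) : D.ncard ≤ 2 :=
  hD.ncard_le_two_of_isClique isClique_range_inl isClique_range_inr range_inl_union_range_inr
    (inter_range_inl_nonempty_of_isDomSet hD.1) (inter_range_inr_nonempty_of_isDomSet hD.1)

end Xgraph

theorem stmt_6 (n : ℕ) : upperDom (Xgraph n) = 2 := by
  refine IsGreatest.csSup_eq ⟨⟨_, Xgraph.isMinDomSet_inl_zero_inr_zero, ?_⟩, ?_⟩
  · exact ncard_pair (by simp)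
  · rintro m ⟨D, hD, rfl⟩
    exact Xgraph.ncard_le_two_of_isMinDomSet hD
end

section
/- Let G and H be graphs, I_G a maximal independent set of G, I_H a maximal independent set of H, G' the subgraph of G induced by V(G)∖I_G, and H' the subgraph of H induced by V(H)∖I_H. Then Γ(G □ H) ≥ |I_G|·|I_H| + Γ(G' □ H'). -/
/-!
Let `D'` be a minimal dominating set of `G' □ H'` of maximum size and put
`D = (I_G × I_H) ∪ D'`. A vertex of `G □ H` is adjacent to `I_G × I_H` exactly when one of its
coordinates lies in the corresponding independent set and the other does not: maximality of
`I_G` and `I_H` gives one direction, their independence the other. So `I_G × I_H` dominates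
everything outside `(I_G × I_H) ∪ V(G' □ H')`, `D'` dominates the rest, no vertex of
`I_G × I_H` is adjacent to another vertex of `D`, and the vertices of `G' □ H'` are only
dominated from within `G' □ H'`. Hence `D` is a minimal dominating set of `G □ H`.
-/

open SimpleGraph

variable {V : Type*} {W : Type*}

namespace SimpleGraph.Embedding

variable {α β γ δ : Type*} {G : SimpleGraph α} {G₂ : SimpleGraph γ} {H : SimpleGraph β}
  {H₂ : SimpleGraph δ}

def boxProdMap (f : G ↪g G₂) (g : H ↪g H₂) : G.boxProd H ↪g G₂.boxProd H₂ where
  toEmbedding := f.toEmbedding.prodMap g.toEmbedding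
  map_rel_iff' := or_congr (and_congr f.map_adj_iff g.injective.eq_iff)
    (and_congr g.map_adj_iff f.injective.eq_iff)

@[simp]
lemma coe_boxProdMap (f : G ↪g G₂) (g : H ↪g H₂) : ⇑(boxProdMap f g) = Prod.map f g := rfl

end SimpleGraph.Embedding

lemma IsMaxIndep.exists_adj_of_notMem {G : SimpleGraph V} {I : Set V} (hI : IsMaxIndep G I)
    {v : V} (hv : v ∉ I) : ∃ u ∈ I, G.Adj u v := by
  by_contra! h
  have hind : IsIndep G (insert v I) := by
    rintro a (rfl | ha) b (rfl | hb)
    · exact G.irrefl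
    · exact fun hab => h b hb hab.symm
    · exact h a ha
    · exact hI.1 a ha b hb
  exact hv (hI.2 _ hind (Set.subset_insert v I) ▸ Set.mem_insert v I)

lemma IsDomSet.mono_s8 {G : SimpleGraph V} {D₀ D₁ : Set V} (hD : IsDomSet G D₀)
    (h : D₀ ⊆ D₁) : IsDomSet G D₁ := fun v hv => by
  obtain ⟨u, hu, hadj⟩ := hD v (fun hv₀ => hv (h hv₀))
  exact ⟨u, h hu, hadj⟩

lemma IsDomSet.isMinDomSet {G : SimpleGraph V} {D : Set V} (hD : IsDomSet G D)
    (h : ∀ x ∈ D, ¬ IsDomSet G (D \ {x})) : IsMinDomSet G D := by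
  refine ⟨hD, fun D₀ hsub hD₀ => ?_⟩
  obtain ⟨x, hxD, hxD₀⟩ := Set.exists_of_ssubset hsub
  exact h x hxD (hD₀.mono_s8 fun y hy => ⟨hsub.1 hy, fun hyx => hxD₀ (hyx ▸ hy)⟩)

lemma exists_isMinDomSet [Finite V] (G : SimpleGraph V) : ∃ D, IsMinDomSet G D := by
  obtain ⟨D, -, hD⟩ := exists_minimal_le_of_wellFoundedLT (IsDomSet G) Set.univ
    fun v hv => absurd (Set.mem_univ v) hv
  exact ⟨D, hD.1, fun _ hsub => hD.not_prop_of_ssubset hsub⟩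

lemma bddAbove_ncard_isMinDomSet [Finite V] (G : SimpleGraph V) :
    BddAbove {n | ∃ D : Set V, IsMinDomSet G D ∧ D.ncard = n} := by
  refine ⟨Nat.card V, ?_⟩
  rintro _ ⟨D, -, rfl⟩
  exact Set.ncard_le_card D

lemma IsMinDomSet.ncard_le_upperDom [Finite V] {G : SimpleGraph V} {D : Set V}
    (hD : IsMinDomSet G D) : D.ncard ≤ upperDom G :=
  le_csSup (bddAbove_ncard_isMinDomSet G) ⟨D, hD, rfl⟩

lemma exists_isMinDomSet_ncard_eq_upperDom [Finite V] (G : SimpleGraph V) :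
    ∃ D, IsMinDomSet G D ∧ D.ncard = upperDom G := by
  obtain ⟨D, hD⟩ := exists_isMinDomSet G
  exact Nat.sSup_mem (s := {n | ∃ D : Set V, IsMinDomSet G D ∧ D.ncard = n})
    ⟨D.ncard, D, hD, rfl⟩ (bddAbove_ncard_isMinDomSet G)

/-- Each `a ∈ A` is its own private neighbour, and a vertex of `range f` can only be dominated
from `range f`. -/
lemma IsMinDomSet.union_image {G : SimpleGraph V} {G' : SimpleGraph W} {D' : Set W}
    (hD' : IsMinDomSet G' D') (f : G' ↪g G) {A : Set V} (hdisj : Disjoint A (Set.range f))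
    (hA : ∀ x, (∃ a ∈ A, G.Adj a x) ↔ x ∉ A ∪ Set.range f) :
    IsMinDomSet G (A ∪ f '' D') := by
  have hA_range : ∀ a ∈ A, ∀ y, ¬ G.Adj a (f y) := fun a ha y hadj =>
    (hA (f y)).1 ⟨a, ha, hadj⟩ (Or.inr ⟨y, rfl⟩)
  refine IsDomSet.isMinDomSet ?dom ?minimal
  case dom =>
    intro x hx
    by_cases hxf : x ∈ Set.range f
    · obtain ⟨y, rfl⟩ := hxf
      obtain ⟨u, hu, hadj⟩ := hD'.1 y fun hy => hx (Or.inr ⟨y, hy, rfl⟩)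
      exact ⟨f u, Or.inr ⟨u, hu, rfl⟩, f.map_adj_iff.2 hadj⟩
    · obtain ⟨a, ha, hadj⟩ := (hA x).2 fun h => h.elim (fun h => hx (Or.inl h)) hxf
      exact ⟨a, Or.inl ha, hadj⟩
  case minimal =>
    rintro x (hxA | ⟨y, hy, rfl⟩) hdom
    · obtain ⟨u, ⟨hu, -⟩, hadj⟩ := hdom x fun h => h.2 rfl
      exact (hA u).1 ⟨x, hxA, hadj.symm⟩ (hu.imp id fun ⟨u', _, hu'⟩ => ⟨u', hu'⟩)
    · refine hD'.2 _ (Set.sdiff_singleton_ssubset.2 hy) fun z hz => ?_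
      have hfz : f z ∉ (A ∪ f '' D') \ {f y} := by
        rintro ⟨hzA | ⟨z', hz', hfz'⟩, hne⟩
        · exact hdisj.notMem_of_mem_left hzA ⟨z, rfl⟩
        · cases f.injective hfz'
          exact hz ⟨hz', fun h => hne (congrArg f h)⟩
      obtain ⟨u, ⟨hu | ⟨u', hu', rfl⟩, hne⟩, hadj⟩ := hdom (f z) hfz
      · exact absurd hadj (hA_range u hu z)
      · exact ⟨u', ⟨hu', fun h => hne (congrArg f h)⟩, f.map_adj_iff.1 hadj⟩

lemma IsMaxIndep.exists_boxProd_adj_iff {G : SimpleGraph V} {H : SimpleGraph W} {IG : Set V}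
    {IH : Set W} (hIG : IsMaxIndep G IG) (hIH : IsMaxIndep H IH) (x : V × W) :
    (∃ a ∈ IG ×ˢ IH, (G.boxProd H).Adj a x) ↔ x ∉ IG ×ˢ IH ∪ IGᶜ ×ˢ IHᶜ := by
  obtain ⟨v, w⟩ := x
  constructor
  · rintro ⟨⟨a, b⟩, ⟨ha, hb⟩, hadj⟩
    rcases boxProd_adj.1 hadj with ⟨hab, rfl⟩ | ⟨hab, rfl⟩
    · have hv : v ∉ IG := fun hv => hIG.1 a ha v hv hab
      simp [hv, hb]
    · have hw : w ∉ IH := fun hw => hIH.1 b hb w hw hab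
      simp [hw, ha]
  · intro hx
    by_cases hv : v ∈ IG
    · have hw : w ∉ IH := fun hw => hx (Or.inl ⟨hv, hw⟩)
      obtain ⟨b, hb, hadj⟩ := hIH.exists_adj_of_notMem hw
      exact ⟨(v, b), ⟨hv, hb⟩, boxProd_adj_right.2 hadj⟩
    · have hw : w ∈ IH := by_contra fun hw => hx (Or.inr ⟨hv, hw⟩)
      obtain ⟨a, ha, hadj⟩ := hIG.exists_adj_of_notMem hv
      exact ⟨(a, w), ⟨ha, hw⟩, boxProd_adj_left.2 hadj⟩

theorem stmt_8 [Fintype V] [Fintype W] (G : SimpleGraph V) (H : SimpleGraph W)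
    (IG : Set V) (IH : Set W) (hIG : IsMaxIndep G IG) (hIH : IsMaxIndep H IH) :
    upperDom (G.boxProd H) ≥
      IG.ncard * IH.ncard +
        upperDom ((SimpleGraph.induce IGᶜ G).boxProd (SimpleGraph.induce IHᶜ H)) := by
  let f := Embedding.boxProdMap (Embedding.induce (G := G) IGᶜ) (Embedding.induce (G := H) IHᶜ)
  have hrange : Set.range f = IGᶜ ×ˢ IHᶜ := by
    rw [Embedding.coe_boxProdMap, Set.range_prodMap]
    exact congrArg₂ _ Subtype.range_coe Subtype.range_coe
  have hdisj : Disjoint (IG ×ˢ IH) (Set.range f) :=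
    hrange ▸ Set.disjoint_prod.2 (Or.inl disjoint_compl_right)
  obtain ⟨D', hD', hcard⟩ :=
    exists_isMinDomSet_ncard_eq_upperDom ((G.induce IGᶜ).boxProd (H.induce IHᶜ))
  have hD := hD'.union_image f hdisj (hrange ▸ hIG.exists_boxProd_adj_iff hIH)
  calc IG.ncard * IH.ncard + upperDom ((G.induce IGᶜ).boxProd (H.induce IHᶜ))
      = (IG ×ˢ IH ∪ f '' D').ncard := by
        rw [Set.ncard_union_eq (hdisj.mono_right (Set.image_subset_range _ _)), Set.ncard_prod,
          Set.ncard_image_of_injective _ f.injective, hcard]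
    _ ≤ upperDom (G.boxProd H) := hD.ncard_le_upperDom
end

section
/- If G is a graph with at least one edge and H is any finite graph, then Γ(G □ H) ≥ |V(H)|. -/
/-!
Pick an edge `uv` of `G`. The vertices `(x, w)` of `G □ H` with `x` not adjacent to `u` form a
dominating set (each `(x, w)` with `x ~ u` is dominated by `(u, w)`), so it contains a minimal
dominating set `D`. For every `w`, the vertex `(v, w)` lies outside `D` and its dominating neighbour
cannot be of the form `(v, h)`, since `v ~ u`; hence it is `(y, w)` for some `y`, so `D` meets every
`G`-fiber `V × {w}` and has at least `|V(H)|` elements.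
-/

open SimpleGraph

variable {V : Type*} {W : Type*}

lemma IsDomSet.exists_isMinDomSet_subset [Finite V] {G : SimpleGraph V} {D : Set V}
    (hD : IsDomSet G D) : ∃ D' ⊆ D, IsMinDomSet G D' := by
  obtain ⟨D', hD'D, hmin⟩ := exists_minimal_le_of_wellFoundedLT (IsDomSet G) D hD
  exact ⟨D', hD'D, hmin.prop, fun _ hlt => hmin.not_prop_of_lt hlt⟩

lemma card_le_ncard_of_forall_exists_mem_fiber [Finite V] [Finite W] {D : Set (V × W)}
    (hD : ∀ w, ∃ x, (x, w) ∈ D) : Nat.card W ≤ D.ncard := by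
  have hsurj : Prod.snd '' D = Set.univ :=
    Set.eq_univ_of_forall fun w => (hD w).elim fun x hx => ⟨(x, w), hx, rfl⟩
  calc Nat.card W = (Prod.snd '' D).ncard := by rw [hsurj, Set.ncard_univ]
    _ ≤ D.ncard := Set.ncard_image_le

lemma isDomSet_boxProd_setOf_not_adj (G : SimpleGraph V) (H : SimpleGraph W) (u : V) :
    IsDomSet (G □ H) {p | ¬ G.Adj u p.1} := by
  rintro ⟨x, w⟩ hx
  refine ⟨(u, w), G.irrefl, ?_⟩
  exact boxProd_adj.mpr (Or.inl ⟨not_not.mp hx, rfl⟩)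

lemma IsDomSet.exists_mem_fiber_of_subset_setOf_not_adj {G : SimpleGraph V}
    {H : SimpleGraph W} {u v : V} (huv : G.Adj u v) {D : Set (V × W)}
    (hD : IsDomSet (G □ H) D) (hDu : D ⊆ {p | ¬ G.Adj u p.1}) (w : W) :
    ∃ y, (y, w) ∈ D := by
  obtain ⟨⟨y, h⟩, hyh, hadj⟩ := hD (v, w) fun hvw => hDu hvw huv
  rcases boxProd_adj.mp hadj with ⟨-, rfl⟩ | ⟨-, rfl⟩
  · exact ⟨y, hyh⟩
  · exact absurd huv (hDu hyh)

theorem stmt_10 [Fintype V] [Fintype W] (G : SimpleGraph V) (H : SimpleGraph W)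
    (hG : ∃ u v, G.Adj u v) :
    upperDom (G.boxProd H) ≥ Fintype.card W := by
  obtain ⟨u, v, huv⟩ := hG
  obtain ⟨D, hDu, hD⟩ :=
    (isDomSet_boxProd_setOf_not_adj G H u).exists_isMinDomSet_subset
  have hfiber := hD.1.exists_mem_fiber_of_subset_setOf_not_adj huv hDu
  calc Fintype.card W = Nat.card W := Nat.card_eq_fintype_card.symm
    _ ≤ D.ncard := card_le_ncard_of_forall_exists_mem_fiber hfiber
    _ ≤ upperDom (G □ H) := hD.ncard_le_upperDom
end

section
/- If G = K_{m,n} with m, n ≥ 2, and u, u' are vertices in different partite sets of G, then {u, u'} × V(H) is a minimal dominating set of G □ H for any graph H; hence Γ(K_{m,n} □ H) ≥ 2|V(H)|. -/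
open SimpleGraph

variable {V : Type*} {W : Type*}

theorem stmt_13 [Fintype W] (m n : ℕ) (hm : 2 ≤ m) (hn : 2 ≤ n)
    (a : Fin m) (b : Fin n) (H : SimpleGraph W) :
    IsMinDomSet ((completeBipartiteGraph (Fin m) (Fin n)).boxProd H)
      (({Sum.inl a, Sum.inr b} : Set (Fin m ⊕ Fin n)) ×ˢ (Set.univ : Set W)) ∧
    upperDom ((completeBipartiteGraph (Fin m) (Fin n)).boxProd H) ≥ 2 * Fintype.card W := by
  set D : Set ((Fin m ⊕ Fin n) × W) :=
    ({Sum.inl a, Sum.inr b} : Set (Fin m ⊕ Fin n)) ×ˢ (Set.univ : Set W) with hD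
  -- pick another element in each side
  haveI : Nontrivial (Fin m) := Fin.nontrivial_iff_two_le.mpr hm
  haveI : Nontrivial (Fin n) := Fin.nontrivial_iff_two_le.mpr hn
  obtain ⟨a', ha'⟩ : ∃ a' : Fin m, a' ≠ a := exists_ne a
  obtain ⟨b', hb'⟩ : ∃ b' : Fin n, b' ≠ b := exists_ne b
  have hmin : IsMinDomSet ((completeBipartiteGraph (Fin m) (Fin n)).boxProd H) D := by
    constructor
    · rintro ⟨x, w⟩ hx
      rcases x with a₁ | b₁
      · exact ⟨(Sum.inr b, w), ⟨by simp, trivial⟩, Or.inl ⟨by simp, rfl⟩⟩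
      · exact ⟨(Sum.inl a, w), ⟨by simp, trivial⟩, Or.inl ⟨by simp, rfl⟩⟩
    · rintro D' ⟨hsub, hne⟩ hdom
      obtain ⟨⟨x, w⟩, hxD, hxD'⟩ : ∃ p, p ∈ D ∧ p ∉ D' := Set.not_subset.mp hne
      have hxmem : x = Sum.inl a ∨ x = Sum.inr b := by
        simpa [hD] using hxD.1
      rcases hxmem with rfl | rfl
      · -- removed (inl a, w); vertex (inr b', w) cannot be dominated without it
        have hout : ((Sum.inr b' : Fin m ⊕ Fin n), w) ∉ D' := by
          intro h
          have := hsub h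
          simp [hD, hb'] at this
        obtain ⟨⟨u, w'⟩, huD', hadj⟩ := hdom _ hout
        have humem : u = Sum.inl a ∨ u = Sum.inr b := by
          simpa [hD] using (hsub huD').1
        rcases hadj with ⟨hadj, hw⟩ | ⟨hadj, hu⟩
        · subst hw
          rcases humem with rfl | rfl
          · exact hxD' huD'
          · simp at hadj
        · rcases humem with rfl | rfl <;> simp at hu
          exact hb' hu.symm
      · -- removed (inr b, w); vertex (inl a', w) cannot be dominated without it
        have hout : ((Sum.inl a' : Fin m ⊕ Fin n), w) ∉ D' := by
          intro h
          have := hsub h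
          simp [hD, ha'] at this
        obtain ⟨⟨u, w'⟩, huD', hadj⟩ := hdom _ hout
        have humem : u = Sum.inl a ∨ u = Sum.inr b := by
          simpa [hD] using (hsub huD').1
        rcases hadj with ⟨hadj, hw⟩ | ⟨hadj, hu⟩
        · subst hw
          rcases humem with rfl | rfl
          · simp at hadj
          · exact hxD' huD'
        · rcases humem with rfl | rfl <;> simp at hu
          exact ha' hu.symm
  refine ⟨hmin, ?_⟩
  have hcard : D.ncard = 2 * Fintype.card W := by
    have h1 : D.ncard = Nat.card D := (Nat.card_coe_set_eq D).symm
    rw [h1, Nat.card_congr (Equiv.Set.prod _ _), Nat.card_prod,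
      Nat.card_coe_set_eq, Nat.card_coe_set_eq,
      Set.ncard_pair (by simp : (Sum.inl a : Fin m ⊕ Fin n) ≠ Sum.inr b),
      Set.ncard_univ, Nat.card_eq_fintype_card]
  have hbdd : BddAbove {k | ∃ D : Set ((Fin m ⊕ Fin n) × W),
      IsMinDomSet ((completeBipartiteGraph (Fin m) (Fin n)).boxProd H) D ∧ D.ncard = k} := by
    refine ⟨Fintype.card ((Fin m ⊕ Fin n) × W), ?_⟩
    rintro k ⟨D₀, _, rfl⟩
    exact le_trans (Set.ncard_le_ncard (Set.subset_univ D₀) Set.finite_univ)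
      (by simp [Set.ncard_univ])
  calc upperDom ((completeBipartiteGraph (Fin m) (Fin n)).boxProd H)
      ≥ D.ncard := le_csSup hbdd ⟨D, hmin, rfl⟩
    _ = 2 * Fintype.card W := hcard
end

section
/- Let G and H be graphs and D a minimal dominating set of H with D^P the set of vertices of D having a private D-neighbor and D^I = D ∖ D^P. If N[D^P] ∪ D^I = V(H), then Γ(G □ H) ≥ |V(G)|·|D^P| + Γ(G)·|D^I|. -/
open SimpleGraph

variable {V : Type*} {W : Type*}

lemma ncard_sprod {A B : Type*} (s : Set A) (t : Set B) :
    (s ×ˢ t).ncard = s.ncard * t.ncard := by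
  rw [← Nat.card_coe_set_eq, ← Nat.card_coe_set_eq, ← Nat.card_coe_set_eq,
    Nat.card_congr (Equiv.Set.prod s t), Nat.card_prod]

/-- Existence of a minimal dominating set in a finite graph. -/
lemma exists_minDomSet {V : Type*} [Fintype V] (G : SimpleGraph V) :
    ∃ D : Set V, IsMinDomSet G D := by
  classical
  set s : Set ℕ := {n | ∃ D : Set V, IsDomSet G D ∧ D.ncard = n} with hs
  have hne : s.Nonempty := ⟨(Set.univ : Set V).ncard, Set.univ, fun v hv => (hv trivial).elim, rfl⟩
  obtain ⟨D, hDdom, hcard⟩ := Nat.sInf_mem hne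
  refine ⟨D, hDdom, fun D' hss hdom => ?_⟩
  have hlt : D'.ncard < D.ncard := Set.ncard_lt_ncard hss (Set.toFinite D)
  have : sInf s ≤ D'.ncard := Nat.sInf_le ⟨D', hdom, rfl⟩
  omega

lemma le_upperDom {V : Type*} [Fintype V] {G : SimpleGraph V} {S : Set V}
    (hS : IsMinDomSet G S) : S.ncard ≤ upperDom G := by
  apply le_csSup
  · exact ⟨Fintype.card V, fun n ⟨T, _, hT⟩ => hT ▸ (Set.ncard_le_ncard (Set.subset_univ T)
      (Set.toFinite _)).trans (by simp [Set.ncard_univ])⟩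
  · exact ⟨S, hS, rfl⟩

lemma exists_upperDom_witness {V : Type*} [Fintype V] (G : SimpleGraph V) :
    ∃ B : Set V, IsMinDomSet G B ∧ B.ncard = upperDom G := by
  have hne : {n | ∃ D : Set V, IsMinDomSet G D ∧ D.ncard = n}.Nonempty := by
    obtain ⟨D, hD⟩ := exists_minDomSet G
    exact ⟨D.ncard, D, hD, rfl⟩
  have hbdd : BddAbove {n | ∃ D : Set V, IsMinDomSet G D ∧ D.ncard = n} :=
    ⟨Fintype.card V, fun n ⟨T, _, hT⟩ => hT ▸ (Set.ncard_le_ncard (Set.subset_univ T)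
      (Set.toFinite _)).trans (by simp [Set.ncard_univ])⟩
  obtain ⟨B, hB, hcard⟩ := Nat.sSup_mem hne hbdd
  exact ⟨B, hB, hcard⟩

/-- In a minimal dominating set, each element has a closed private neighbor. -/
lemma minDom_private {V : Type*} {G : SimpleGraph V} {B : Set V} (hB : IsMinDomSet G B)
    {g : V} (hg : g ∈ B) :
    ∃ x, (x = g ∨ G.Adj g x) ∧ ∀ u ∈ B, (u = x ∨ G.Adj u x) → u = g := by
  obtain ⟨hdom, hmin⟩ := hB
  have hss : B \ {g} ⊂ B := Set.sdiff_singleton_ssubset.mpr hg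
  have := hmin _ hss
  simp only [IsDomSet, not_forall] at this
  obtain ⟨x, hx, hno⟩ := this
  push_neg at hno
  have hxB : x ∈ B → x = g := by
    intro hxB
    by_contra hne
    exact hx ⟨hxB, hne⟩
  refine ⟨x, ?_, ?_⟩
  · by_cases hxg : x = g
    · exact Or.inl hxg
    · have hxnB : x ∉ B := fun h => hxg (hxB h)
      obtain ⟨u, huB, hadj⟩ := hdom x hxnB
      have : u = g := by
        by_contra hug
        exact (hno u ⟨huB, hug⟩) hadj
      exact Or.inr (this ▸ hadj)
  · intro u huB hu
    by_contra hug
    rcases hu with rfl | hadj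
    · exact hug (hxB huB)
    · exact (hno u ⟨huB, hug⟩) hadj

/-- A vertex of a minimal dominating set without a private neighbor has no
neighbor inside the set. -/
lemma no_inner_neighbor {W : Type*} {H : SimpleGraph W} {D : Set W}
    (hD : IsMinDomSet H D) {h : W} (hh : h ∈ D) (hnp : h ∉ privSet H D) :
    ∀ w ∈ D, ¬ H.Adj w h := by
  obtain ⟨hdom, hmin⟩ := hD
  have hss : D \ {h} ⊂ D := Set.sdiff_singleton_ssubset.mpr hh
  have := hmin _ hss
  simp only [IsDomSet, not_forall] at this
  obtain ⟨x, hx, hno⟩ := this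
  push_neg at hno
  by_cases hxh : x = h
  · subst hxh
    intro w hw hadj
    have hwx : w ≠ x := fun he => (he ▸ hadj).ne rfl
    exact hno w ⟨hw, hwx⟩ hadj
  · exfalso
    have hxnD : x ∉ D := fun hxD => hx ⟨hxD, hxh⟩
    obtain ⟨u, huD, hadj⟩ := hdom x hxnD
    have huh : u = h := by
      by_contra hne
      exact hno u ⟨huD, hne⟩ hadj
    subst huh
    exact hnp ⟨hh, x, hxnD, hadj, fun w hw hwadj => by
      by_contra hne
      exact hno w ⟨hw, hne⟩ hwadj⟩

theorem stmt_18 [Fintype V] [Fintype W] (G : SimpleGraph V) (H : SimpleGraph W)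
    (D : Set W) (hD : IsMinDomSet H D)
    (hcov : ∀ v : W, v ∈ D \ privSet H D ∨ v ∈ privSet H D ∨
      ∃ u ∈ privSet H D, H.Adj u v) :
    upperDom (G.boxProd H) ≥
      Fintype.card V * (privSet H D).ncard + upperDom G * (D \ privSet H D).ncard := by
  classical
  set P := privSet H D with hP
  set I := D \ P with hI
  have hPD : P ⊆ D := fun v hv => hv.1
  obtain ⟨B, hB, hBcard⟩ := exists_upperDom_witness G
  set S : Set (V × W) := (Set.univ ×ˢ P) ∪ (B ×ˢ I) with hS
  -- membership facts
  have hmemS : ∀ x : V × W, x ∈ S → x.2 ∈ D := by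
    rintro ⟨g, h⟩ (⟨-, hp⟩ | ⟨-, hi⟩)
    · exact hPD hp
    · exact hi.1
  -- S is dominating
  have hdomS : IsDomSet (G.boxProd H) S := by
    rintro ⟨g, h⟩ hgh
    rcases hcov h with hi | hp | ⟨u, hu, hadj⟩
    · -- h ∈ I : g ∉ B, use a B-neighbor of g
      have hgB : g ∉ B := fun hgB => hgh (Or.inr ⟨hgB, hi⟩)
      obtain ⟨b, hbB, hadj⟩ := hB.1 g hgB
      exact ⟨(b, h), Or.inr ⟨hbB, hi⟩, Or.inl ⟨hadj, rfl⟩⟩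
    · exact absurd (Or.inl ⟨trivial, hp⟩) hgh
    · exact ⟨(g, u), Or.inl ⟨trivial, hu⟩, Or.inr ⟨hadj, rfl⟩⟩
  -- S is minimal
  have hminS : IsMinDomSet (G.boxProd H) S := by
    refine ⟨hdomS, fun D' hss hdom' => ?_⟩
    obtain ⟨hsub, hne⟩ := Set.ssubset_iff_subset_ne.mp hss
    obtain ⟨s, hsS, hsD'⟩ := Set.exists_of_ssubset hss
    obtain ⟨g, h⟩ := s
    rcases hsS with ⟨-, hp⟩ | ⟨hgB, hi⟩
    · -- h has a private neighbor u; (g,u) is undominated by D'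
      obtain ⟨hhD, u, huD, hadj, hpriv⟩ := hp
      have hxS : (g, u) ∉ S := fun hx => huD (hmemS _ hx)
      have hxD' : (g, u) ∉ D' := fun hx => hxS (hsub hx)
      obtain ⟨⟨g', h'⟩, htD', hadj'⟩ := hdom' (g, u) hxD'
      have htS := hsub htD'
      have hh'D : h' ∈ D := hmemS _ htS
      rcases hadj' with ⟨-, h2⟩ | ⟨hadjH, h1⟩
      · have h2' : h' = u := h2
        exact huD (h2' ▸ hh'D)
      · have : h' = h := hpriv h' hh'D hadjH
        subst this; subst h1
        exact hsD' htD'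
    · -- h ∈ I, g ∈ B: use B-private neighbor x₀ of g; (x₀, h) undominated
      obtain ⟨x₀, hx₀, hx₀priv⟩ := minDom_private hB hgB
      have hnoIn := no_inner_neighbor hD hi.1 hi.2
      have hxD' : (x₀, h) ∉ D' := by
        intro hx
        rcases hsub hx with ⟨-, hp⟩ | ⟨hx₀B, -⟩
        · exact hi.2 hp
        · have : x₀ = g := hx₀priv x₀ hx₀B (Or.inl rfl)
          exact hsD' (this ▸ hx)
      obtain ⟨⟨g', h'⟩, htD', hadj'⟩ := hdom' (x₀, h) hxD'
      have htS := hsub htD'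
      rcases hadj' with ⟨hadjG, h2⟩ | ⟨hadjH, h1⟩
      · -- same H-coordinate h, g' adjacent to x₀
        have hg'B : g' ∈ B := by
          rcases htS with ⟨-, hp⟩ | ⟨hg'B, -⟩
          · have h2' : h' = h := h2
            exact absurd (h2' ▸ hp : h ∈ P) hi.2
          · exact hg'B
        have : g' = g := hx₀priv g' hg'B (Or.inr hadjG)
        subst this
        simp only at h2
        subst h2
        exact hsD' htD'
      · exact hnoIn h' (hmemS _ htS) hadjH
  -- cardinality of S
  have hdisj : Disjoint (Set.univ ×ˢ P : Set (V × W)) (B ×ˢ I) := by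
    rw [Set.disjoint_iff]
    rintro ⟨g, h⟩ ⟨⟨-, hp⟩, ⟨-, hi⟩⟩
    exact (hi.2 hp).elim
  have hcard : S.ncard = Fintype.card V * P.ncard + upperDom G * I.ncard := by
    rw [hS, Set.ncard_union_eq hdisj (Set.toFinite _) (Set.toFinite _),
      ncard_sprod, ncard_sprod, Set.ncard_univ, Nat.card_eq_fintype_card, hBcard]
  calc Fintype.card V * P.ncard + upperDom G * I.ncard = S.ncard := hcard.symm
    _ ≤ upperDom (G.boxProd H) := le_upperDom hminS
end
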